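/- arXiv:1308.4430 — 5 statements merged into one kernel-verified Lean document; each statement's English description precedes it below -/
import Mathlib

section
/- Let I, J ⊆ ℝ be open intervals, A : I → ℝ continuous, and ψ : I × J → ℂ a smooth solution of i ψ_t + ψ_xx + (1/2)(|ψ|² − A(t)) ψ = 0. Let T : I × J → ℝ³ and N = e₁ + i e₂ : I × J → ℂ³ be C² maps such that for all (t,x) the triple (T, e₁, e₂)(t,x) is a positively oriented orthonormal basis of ℝ³ and the evolution laws T_x = Re(conj(ψ) N), N_x = −ψ T, T_t = Im(conj(ψ_x) N), N_t = −i ψ_x T + (i/2)(|ψ|² − A(t)) N hold. Then for any P ∈ ℝ³, t₀ ∈ I, x₀ ∈ J, the map χ(t,x) = P + ∫_{t₀}^{t} (T ∧ T_x)(τ, x₀) dτ + ∫_{x₀}^{x} T(t,s) ds satisfies χ_x = T (so x is an arclength parameter) and solves the vortex filament equation χ_t = χ_x ∧ χ_xx on I × J. -/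
noncomputable section

/-- Cross product in ℝ³. -/
def cross3 (a b : Fin 3 → ℝ) : Fin 3 → ℝ :=
  ![a 1 * b 2 - a 2 * b 1, a 2 * b 0 - a 0 * b 2, a 0 * b 1 - a 1 * b 0]

/-- Dot product in ℝ³. -/
def dot3 (a b : Fin 3 → ℝ) : ℝ := ∑ i, a i * b i

lemma cross3_self (a : Fin 3 → ℝ) : cross3 a a = 0 := by
  funext i; fin_cases i <;> simp [cross3] <;> ring

lemma cross3_triple (a b : Fin 3 → ℝ) :
    cross3 a (cross3 a b) = fun i => dot3 a b * a i - dot3 a a * b i := by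
  funext i; fin_cases i <;>
    simp [cross3, dot3, Fin.sum_univ_three] <;> ring

lemma cross3_comb (a u v w : Fin 3 → ℝ) (c d e : ℝ) :
    cross3 a (fun i => c * u i + d * v i + e * w i)
      = fun i => c * cross3 a u i + d * cross3 a v i + e * cross3 a w i := by
  funext i; fin_cases i <;> simp [cross3] <;> ring

lemma hasDerivAt_cross3 {u v : ℝ → Fin 3 → ℝ} {u' v' : Fin 3 → ℝ} {x : ℝ}
    (hu : HasDerivAt u u' x) (hv : HasDerivAt v v' x) :
    HasDerivAt (fun y => cross3 (u y) (v y)) (cross3 u' (v x) + cross3 (u x) v') x := by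
  rw [hasDerivAt_pi] at hu hv ⊢
  intro i
  fin_cases i
  · show HasDerivAt (fun y => u y 1 * v y 2 - u y 2 * v y 1)
      (u' 1 * v x 2 - u' 2 * v x 1 + (u x 1 * v' 2 - u x 2 * v' 1)) x
    exact (((hu 1).mul (hv 2)).sub ((hu 2).mul (hv 1))).congr_deriv (by ring)
  · show HasDerivAt (fun y => u y 2 * v y 0 - u y 0 * v y 2)
      (u' 2 * v x 0 - u' 0 * v x 2 + (u x 2 * v' 0 - u x 0 * v' 2)) x
    exact (((hu 2).mul (hv 0)).sub ((hu 0).mul (hv 2))).congr_deriv (by ring)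
  · show HasDerivAt (fun y => u y 0 * v y 1 - u y 1 * v y 0)
      (u' 0 * v x 1 - u' 1 * v x 0 + (u x 0 * v' 1 - u x 1 * v' 0)) x
    exact (((hu 0).mul (hv 1)).sub ((hu 1).mul (hv 0))).congr_deriv (by ring)

lemma continuousOn_cross3 {α : Type*} [TopologicalSpace α] {u v : α → Fin 3 → ℝ} {s : Set α}
    (hu : ContinuousOn u s) (hv : ContinuousOn v s) :
    ContinuousOn (fun y => cross3 (u y) (v y)) s := by
  have hc : ∀ i, ContinuousOn (fun y => u y i) s ∧ ContinuousOn (fun y => v y i) s := by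
    intro i
    exact ⟨(continuous_apply i).comp_continuousOn hu, (continuous_apply i).comp_continuousOn hv⟩
  apply continuousOn_pi.2
  intro i
  fin_cases i <;>
  · simp only [cross3, Matrix.cons_val_zero, Matrix.cons_val_one, Matrix.head_cons,
      Matrix.cons_val_two, Matrix.tail_cons]
    exact (((hc _).1.mul (hc _).2).sub ((hc _).1.mul (hc _).2))

/-- partial differentiability -/
lemma partial_diff {E : Type*} [NormedAddCommGroup E] [NormedSpace ℝ E]
    {f : ℝ → ℝ → E} {S : Set (ℝ × ℝ)} (hS : IsOpen S)
    (hf : DifferentiableOn ℝ (fun p : ℝ × ℝ => f p.1 p.2) S) {t x : ℝ} (h : (t, x) ∈ S) :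
    DifferentiableAt ℝ (fun y => f t y) x ∧ DifferentiableAt ℝ (fun s => f s x) t := by
  have hd := hf.differentiableAt (hS.mem_nhds h)
  constructor
  · have := hd.comp x ((differentiableAt_const t).prodMk differentiableAt_id)
    exact this
  · have := hd.comp t (by fun_prop : DifferentiableAt ℝ (fun s : ℝ => (s, x)) t)
    exact this

/-- continuity of partial derivative in second variable -/
lemma contOn_deriv_snd {E : Type*} [NormedAddCommGroup E] [NormedSpace ℝ E]
    {f : ℝ → ℝ → E} {S : Set (ℝ × ℝ)} (hS : IsOpen S) {n : WithTop ℕ∞}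
    (hf : ContDiffOn ℝ n (fun p : ℝ × ℝ => f p.1 p.2) S) (hn : 1 ≤ n) :
    ContinuousOn (fun p : ℝ × ℝ => deriv (fun y => f p.1 y) p.2) S := by
  have hfd := hf.continuousOn_fderiv_of_isOpen hS hn
  have : ContinuousOn (fun p : ℝ × ℝ => fderiv ℝ (fun q : ℝ × ℝ => f q.1 q.2) p ((0:ℝ), (1:ℝ))) S :=
    hfd.clm_apply continuousOn_const
  refine this.congr fun p hp => ?_
  have hdiff : DifferentiableAt ℝ (fun q : ℝ × ℝ => f q.1 q.2) p :=
    (hf.differentiableOn (zero_lt_one.trans_le hn).ne').differentiableAt (hS.mem_nhds hp)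
  have hline : HasDerivAt (fun y => ((p.1, y) : ℝ × ℝ)) ((0 : ℝ), (1 : ℝ)) p.2 :=
    (hasDerivAt_const _ _).prodMk (hasDerivAt_id _)
  have := hdiff.hasFDerivAt.comp_hasDerivAt p.2 hline
  exact this.deriv

lemma contOn_deriv_fst {E : Type*} [NormedAddCommGroup E] [NormedSpace ℝ E]
    {f : ℝ → ℝ → E} {S : Set (ℝ × ℝ)} (hS : IsOpen S) {n : WithTop ℕ∞}
    (hf : ContDiffOn ℝ n (fun p : ℝ × ℝ => f p.1 p.2) S) (hn : 1 ≤ n) :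
    ContinuousOn (fun p : ℝ × ℝ => deriv (fun s => f s p.2) p.1) S := by
  have hfd := hf.continuousOn_fderiv_of_isOpen hS hn
  have : ContinuousOn (fun p : ℝ × ℝ => fderiv ℝ (fun q : ℝ × ℝ => f q.1 q.2) p ((1:ℝ), (0:ℝ))) S :=
    hfd.clm_apply continuousOn_const
  refine this.congr fun p hp => ?_
  have hdiff : DifferentiableAt ℝ (fun q : ℝ × ℝ => f q.1 q.2) p :=
    (hf.differentiableOn (zero_lt_one.trans_le hn).ne').differentiableAt (hS.mem_nhds hp)
  have hline : HasDerivAt (fun s => ((s, p.2) : ℝ × ℝ)) ((1 : ℝ), (0 : ℝ)) p.1 :=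
    (hasDerivAt_id _).prodMk (hasDerivAt_const _ _)
  exact (hdiff.hasFDerivAt.comp_hasDerivAt p.1 hline).deriv

open MeasureTheory Metric Topology

/-- **Inverse Hasimoto construction.** From a smooth solution `ψ` of the cubic NLS
`i ψ_t + ψ_xx + (1/2)(|ψ|² − A(t)) ψ = 0` on `I × J` and a parallel (Koiso) frame
`(T, e₁, e₂)` with `N = e₁ + i e₂` satisfying the evolution laws
`T_x = Re(conj ψ · N)`, `N_x = −ψ T`, `T_t = Im(conj ψ_x · N)`,
`N_t = −i ψ_x T + (i/2)(|ψ|² − A(t)) N`, the curve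
`χ(t,x) = P + ∫_{t₀}^{t} (T ∧ T_x)(τ,x₀) dτ + ∫_{x₀}^{x} T(t,s) ds`
satisfies `χ_x = T` and solves the vortex filament equation `χ_t = χ_x ∧ χ_xx` on `I × J`. -/
theorem stmt_1
    (I J : Set ℝ) (hIopen : IsOpen I) (hIint : I.OrdConnected)
    (hJopen : IsOpen J) (hJint : J.OrdConnected)
    (A : ℝ → ℝ) (hA : ContinuousOn A I)
    (ψ : ℝ → ℝ → ℂ)
    (hψreg : ContDiffOn ℝ (⊤ : ℕ∞) (fun p : ℝ × ℝ => ψ p.1 p.2) (I ×ˢ J))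
    -- ψ solves the cubic NLS with potential A(t)
    (hNLS : ∀ t ∈ I, ∀ x ∈ J,
      Complex.I * deriv (fun s => ψ s x) t
        + deriv (fun y => deriv (fun z => ψ t z) y) x
        + (1/2 : ℂ) * (((‖ψ t x‖ : ℝ) : ℂ) ^ 2 - (A t : ℂ)) * ψ t x = 0)
    (T e₁ e₂ : ℝ → ℝ → Fin 3 → ℝ) (N : ℝ → ℝ → Fin 3 → ℂ)
    (hTreg : ContDiffOn ℝ 2 (fun p : ℝ × ℝ => T p.1 p.2) (I ×ˢ J))
    (he₁reg : ContDiffOn ℝ 2 (fun p : ℝ × ℝ => e₁ p.1 p.2) (I ×ˢ J))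
    (he₂reg : ContDiffOn ℝ 2 (fun p : ℝ × ℝ => e₂ p.1 p.2) (I ×ˢ J))
    -- N = e₁ + i e₂
    (hN : ∀ t ∈ I, ∀ x ∈ J, ∀ i : Fin 3,
      N t x i = (e₁ t x i : ℂ) + Complex.I * (e₂ t x i : ℂ))
    -- (T, e₁, e₂) is a positively oriented orthonormal basis of ℝ³
    (hON : ∀ t ∈ I, ∀ x ∈ J,
      dot3 (T t x) (T t x) = 1 ∧ dot3 (e₁ t x) (e₁ t x) = 1 ∧ dot3 (e₂ t x) (e₂ t x) = 1 ∧
      dot3 (T t x) (e₁ t x) = 0 ∧ dot3 (T t x) (e₂ t x) = 0 ∧ dot3 (e₁ t x) (e₂ t x) = 0)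
    (hOrient : ∀ t ∈ I, ∀ x ∈ J, cross3 (T t x) (e₁ t x) = e₂ t x)
    -- the evolution laws of the frame
    (hTx : ∀ t ∈ I, ∀ x ∈ J,
      deriv (fun y => T t y) x = fun i => ((starRingEnd ℂ) (ψ t x) * N t x i).re)
    (hNx : ∀ t ∈ I, ∀ x ∈ J,
      deriv (fun y => N t y) x = fun i => -(ψ t x) * (T t x i : ℂ))
    (hTt : ∀ t ∈ I, ∀ x ∈ J,
      deriv (fun s => T s x) t
        = fun i => ((starRingEnd ℂ) (deriv (fun y => ψ t y) x) * N t x i).im)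
    (hNt : ∀ t ∈ I, ∀ x ∈ J,
      deriv (fun s => N s x) t
        = fun i => -Complex.I * deriv (fun y => ψ t y) x * (T t x i : ℂ)
            + (Complex.I/2) * (((‖ψ t x‖ : ℝ) : ℂ) ^ 2 - (A t : ℂ)) * N t x i)
    (P : Fin 3 → ℝ) (t₀ : ℝ) (ht₀ : t₀ ∈ I) (x₀ : ℝ) (hx₀ : x₀ ∈ J)
    (χ : ℝ → ℝ → Fin 3 → ℝ)
    (hχ : ∀ t x : ℝ, χ t x =
      P + (∫ s in t₀..t, cross3 (T s x₀) (deriv (fun y => T s y) x₀))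
        + ∫ s in x₀..x, T t s) :
    ∀ t ∈ I, ∀ x ∈ J,
      deriv (fun y => χ t y) x = T t x ∧
      deriv (fun s => χ s x) t =
        cross3 (deriv (fun y => χ t y) x) (deriv (fun y => deriv (fun z => χ t z) y) x) := by
  have hS : IsOpen (I ×ˢ J) := hIopen.prod hJopen
  have hmem : ∀ {a b : ℝ}, a ∈ I → b ∈ J → (a, b) ∈ I ×ˢ J :=
    fun ha hb => Set.mk_mem_prod ha hb
  have hone2 : (1 : WithTop ℕ∞) ≤ 2 := one_le_two
  have hTdiffOn : DifferentiableOn ℝ (fun p : ℝ × ℝ => T p.1 p.2) (I ×ˢ J) :=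
    hTreg.differentiableOn two_ne_zero
  have he₁diffOn : DifferentiableOn ℝ (fun p : ℝ × ℝ => e₁ p.1 p.2) (I ×ˢ J) :=
    he₁reg.differentiableOn two_ne_zero
  have he₂diffOn : DifferentiableOn ℝ (fun p : ℝ × ℝ => e₂ p.1 p.2) (I ×ˢ J) :=
    he₂reg.differentiableOn two_ne_zero
  have hψdiffOn : DifferentiableOn ℝ (fun p : ℝ × ℝ => ψ p.1 p.2) (I ×ˢ J) :=
    hψreg.differentiableOn (by simp)
  -- slice continuity of T in the second variable
  have hTcont : ∀ t' ∈ I, ContinuousOn (fun s => T t' s) J := by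
    intro t' ht'
    exact hTreg.continuousOn.comp ((continuous_const.prodMk continuous_id).continuousOn)
      (fun y hy => hmem ht' hy)
  have hTint : ∀ t' ∈ I, ∀ a ∈ J, ∀ b ∈ J, IntervalIntegrable (fun s => T t' s) volume a b :=
    fun t' ht' a ha b hb =>
      ((hTcont t' ht').mono (hJint.uIcc_subset ha hb)).intervalIntegrable
  -- derivative of χ in x
  have hχx : ∀ t ∈ I, ∀ y ∈ J, HasDerivAt (fun z => χ t z) (T t y) y := by
    intro t ht y hy
    have hfun : (fun z => χ t z) = fun z =>
        (P + (∫ s in t₀..t, cross3 (T s x₀) (deriv (fun y => T s y) x₀)))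
          + ∫ s in x₀..z, T t s := funext fun z => hχ t z
    rw [hfun]
    have ftc : HasDerivAt (fun z => ∫ s in x₀..z, T t s) (T t y) y :=
      intervalIntegral.integral_hasDerivAt_right (hTint t ht x₀ hx₀ y hy)
        ((hTcont t ht).stronglyMeasurableAtFilter hJopen y hy)
        ((hTcont t ht).continuousAt (hJopen.mem_nhds hy))
    exact ftc.const_add _
  -- continuity of the x-partial derivative of T as a two-variable map
  have hDx_cont : ContinuousOn (fun p : ℝ × ℝ => deriv (fun y => T p.1 y) p.2) (I ×ˢ J) :=
    contOn_deriv_snd hS hTreg hone2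
  have hDt_cont : ContinuousOn (fun p : ℝ × ℝ => deriv (fun τ => T τ p.2) p.1) (I ×ˢ J) :=
    contOn_deriv_fst hS hTreg hone2
  -- the key pointwise identity: ∂ₓ (T ∧ Tₓ) = T_t
  have hkey : ∀ t' ∈ I, ∀ y ∈ J,
      HasDerivAt (fun z => cross3 (T t' z) (deriv (fun w => T t' w) z))
        (deriv (fun τ => T τ y) t') y := by
    intro t' ht' y hy
    have hTd : HasDerivAt (fun z => T t' z) (deriv (fun w => T t' w) y) y :=
      ((partial_diff hS hTdiffOn (hmem ht' hy)).1).hasDerivAt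
    have hψd : HasDerivAt (fun z => ψ t' z) (deriv (fun w => ψ t' w) y) y :=
      ((partial_diff hS hψdiffOn (hmem ht' hy)).1).hasDerivAt
    set ψX := deriv (fun w => ψ t' w) y with hψXdef
    have hNev : (fun z => N t' z) =ᶠ[𝓝 y]
        (fun z => fun i => (e₁ t' z i : ℂ) + Complex.I * (e₂ t' z i : ℂ)) :=
      Filter.eventuallyEq_of_mem (hJopen.mem_nhds hy)
        (fun z hz => funext fun i => hN t' ht' z hz i)
    have hNdAt : DifferentiableAt ℝ (fun z => N t' z) y := by
      rw [hNev.differentiableAt_iff]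
      apply differentiableAt_pi.2
      intro i
      have h1 : DifferentiableAt ℝ (fun z => e₁ t' z i) y :=
        (differentiableAt_pi.1 (partial_diff hS he₁diffOn (hmem ht' hy)).1) i
      have h2 : DifferentiableAt ℝ (fun z => e₂ t' z i) y :=
        (differentiableAt_pi.1 (partial_diff hS he₂diffOn (hmem ht' hy)).1) i
      exact (Complex.ofRealCLM.differentiableAt.comp y h1).add
        ((Complex.ofRealCLM.differentiableAt.comp y h2).const_mul _)
    have hNd : HasDerivAt (fun z => N t' z) (fun i => -(ψ t' y) * (T t' y i : ℂ)) y := by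
      have := hNdAt.hasDerivAt
      rwa [hNx t' ht' y hy] at this
    have hconj : HasDerivAt (fun z => (starRingEnd ℂ) (ψ t' z)) ((starRingEnd ℂ) ψX) y := by
      have := Complex.conjCLE.toContinuousLinearMap.hasFDerivAt.comp_hasDerivAt y hψd
      exact this
    have hRd : HasDerivAt (fun z => fun i => ((starRingEnd ℂ) (ψ t' z) * N t' z i).re)
        (fun i => ((starRingEnd ℂ) ψX * N t' y i
          + (starRingEnd ℂ) (ψ t' y) * (-(ψ t' y) * (T t' y i : ℂ))).re) y := by
      apply hasDerivAt_pi.2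
      intro i
      have hNi : HasDerivAt (fun z => N t' z i) (-(ψ t' y) * (T t' y i : ℂ)) y :=
        (hasDerivAt_pi.1 hNd) i
      have hmul := hconj.mul hNi
      have := Complex.reCLM.hasFDerivAt.comp_hasDerivAt y hmul
      simpa only [Function.comp_def, Complex.reCLM_apply, Pi.mul_apply] using this
    have hTxev : (fun z => cross3 (T t' z) (deriv (fun w => T t' w) z)) =ᶠ[𝓝 y]
        (fun z => cross3 (T t' z) (fun i => ((starRingEnd ℂ) (ψ t' z) * N t' z i).re)) :=
      Filter.eventuallyEq_of_mem (hJopen.mem_nhds hy) fun z hz => by rw [hTx t' ht' z hz]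
    have hHd := (hasDerivAt_cross3 hTd hRd).congr_of_eventuallyEq hTxev
    refine hHd.congr_deriv (Eq.symm ?_)
    -- now prove the value identity
    rw [hTx t' ht' y hy, hTt t' ht' y hy]
    obtain ⟨h1, h2, h3, h4, h5, h6⟩ := hON t' ht' y hy
    have horz := hOrient t' ht' y hy
    have hTe₂ : cross3 (T t' y) (e₂ t' y) = fun i => -e₁ t' y i := by
      rw [← horz, cross3_triple]
      funext i
      rw [h4, h1]
      ring
    have hRXeq : (fun i => ((starRingEnd ℂ) ψX * N t' y i
          + (starRingEnd ℂ) (ψ t' y) * (-(ψ t' y) * (T t' y i : ℂ))).re)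
        = fun i => ψX.re * e₁ t' y i + ψX.im * e₂ t' y i
            + (-(Complex.normSq (ψ t' y))) * T t' y i := by
      funext i
      rw [hN t' ht' y hy i]
      simp [Complex.mul_re, Complex.mul_im, Complex.normSq_apply]
      ring
    rw [cross3_self, zero_add, hRXeq, cross3_comb]
    funext i
    simp only [horz, hTe₂, cross3_self, Pi.zero_apply, mul_zero, mul_neg, add_zero]
    rw [hN t' ht' y hy i]
    simp [Complex.mul_im, hψXdef]
  intro t ht x hx
  refine ⟨(hχx t ht x hx).deriv, ?_⟩
  have hev : (fun y => deriv (fun z => χ t z) y) =ᶠ[𝓝 x] fun y => T t y :=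
    Filter.eventuallyEq_of_mem (hJopen.mem_nhds hx) fun y hy => (hχx t ht y hy).deriv
  rw [(hχx t ht x hx).deriv, hev.deriv_eq]
  -- continuity of the integrand of the time integral
  have hline : Continuous (fun s : ℝ => ((s, x₀) : ℝ × ℝ)) :=
    continuous_id.prodMk continuous_const
  have hmaps : ∀ s ∈ I, ((s, x₀) : ℝ × ℝ) ∈ I ×ˢ J := fun s hs => hmem hs hx₀
  have hH0cont : ContinuousOn (fun s => cross3 (T s x₀) (deriv (fun y => T s y) x₀)) I := by
    apply continuousOn_cross3
    · exact hTreg.continuousOn.comp hline.continuousOn hmaps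
    · exact hDx_cont.comp hline.continuousOn hmaps
  have hH0int : IntervalIntegrable
      (fun s => cross3 (T s x₀) (deriv (fun y => T s y) x₀)) volume t₀ t :=
    (hH0cont.mono (hIint.uIcc_subset ht₀ ht)).intervalIntegrable
  have hF : HasDerivAt (fun s => ∫ τ in t₀..s, cross3 (T τ x₀) (deriv (fun y => T τ y) x₀))
      (cross3 (T t x₀) (deriv (fun y => T t y) x₀)) t :=
    intervalIntegral.integral_hasDerivAt_right hH0int
      (hH0cont.stronglyMeasurableAtFilter hIopen t ht)
      (hH0cont.continuousAt (hIopen.mem_nhds ht))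
  -- dominated convergence for the space integral
  obtain ⟨ε, hε, hball⟩ := Metric.nhds_basis_closedBall.mem_iff.1 (hIopen.mem_nhds ht)
  have hKsub : Metric.closedBall t ε ×ˢ Set.uIcc x₀ x ⊆ I ×ˢ J :=
    Set.prod_mono hball (hJint.uIcc_subset hx₀ hx)
  have hK : IsCompact (Metric.closedBall t ε ×ˢ Set.uIcc x₀ x) :=
    (isCompact_closedBall _ _).prod isCompact_uIcc
  obtain ⟨C, hC⟩ := hK.exists_bound_of_continuousOn (hDt_cont.mono hKsub)
  have hslicet : ∀ τ ∈ I, ContinuousOn (fun s => deriv (fun τ' => T τ' s) τ) (Set.uIcc x₀ x) :=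
    fun τ hτ => hDt_cont.comp ((continuous_const.prodMk continuous_id).continuousOn)
      (fun s hs => hmem hτ (hJint.uIcc_subset hx₀ hx hs))
  have h1 : ∀ᶠ τ in 𝓝 t, AEStronglyMeasurable (fun s => T τ s)
      (volume.restrict (Set.uIoc x₀ x)) := by
    filter_upwards [hIopen.mem_nhds ht] with τ hτ
    exact (((hTcont τ hτ).mono (hJint.uIcc_subset hx₀ hx)).mono
      Set.uIoc_subset_uIcc).aestronglyMeasurable measurableSet_uIoc
  have h2 : IntervalIntegrable (fun s => T t s) volume x₀ x := hTint t ht x₀ hx₀ x hx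
  have h3 : AEStronglyMeasurable (fun s => deriv (fun τ' => T τ' s) t)
      (volume.restrict (Set.uIoc x₀ x)) :=
    ((hslicet t ht).mono Set.uIoc_subset_uIcc).aestronglyMeasurable measurableSet_uIoc
  have h4 : ∀ᵐ s ∂volume, s ∈ Set.uIoc x₀ x → ∀ τ ∈ Metric.ball t ε,
      ‖deriv (fun τ' => T τ' s) τ‖ ≤ C := by
    refine MeasureTheory.ae_of_all _ fun s hs τ hτ => ?_
    exact hC (τ, s) ⟨Metric.ball_subset_closedBall hτ, Set.uIoc_subset_uIcc hs⟩
  have h5 : IntervalIntegrable (fun _ : ℝ => C) volume x₀ x := intervalIntegrable_const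
  have h6 : ∀ᵐ s ∂volume, s ∈ Set.uIoc x₀ x → ∀ τ ∈ Metric.ball t ε,
      HasDerivAt (fun τ' => T τ' s) (deriv (fun τ' => T τ' s) τ) τ := by
    refine MeasureTheory.ae_of_all _ fun s hs τ hτ => ?_
    have hmem2 : (τ, s) ∈ I ×ˢ J := hmem (hball (Metric.ball_subset_closedBall hτ))
      (hJint.uIcc_subset hx₀ hx (Set.uIoc_subset_uIcc hs))
    exact ((partial_diff hS hTdiffOn hmem2).2).hasDerivAt
  have hG : HasDerivAt (fun τ => ∫ s in x₀..x, T τ s)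
      (∫ s in x₀..x, deriv (fun τ' => T τ' s) t) t :=
    (intervalIntegral.hasDerivAt_integral_of_dominated_loc_of_deriv_le (μ := volume)
      (F := fun τ s => T τ s) (F' := fun τ s => deriv (fun τ' => T τ' s) τ)
      (bound := fun _ => C) (Metric.ball_mem_nhds t hε) h1 h2 h3 h4 h5 h6).2
  -- evaluate the space integral of the time derivative
  have hint2 : IntervalIntegrable (fun s => deriv (fun τ' => T τ' s) t) volume x₀ x :=
    (hslicet t ht).intervalIntegrable
  have heval : (∫ s in x₀..x, deriv (fun τ' => T τ' s) t)
      = cross3 (T t x) (deriv (fun w => T t w) x)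
        - cross3 (T t x₀) (deriv (fun w => T t w) x₀) :=
    intervalIntegral.integral_eq_sub_of_hasDerivAt
      (fun y hy => hkey t ht y (hJint.uIcc_subset hx₀ hx hy)) hint2
  -- assemble
  have hfun2 : (fun s => χ s x) = fun s =>
      (P + ∫ τ in t₀..s, cross3 (T τ x₀) (deriv (fun y => T τ y) x₀)) + ∫ s' in x₀..x, T s s' :=
    funext fun s => hχ s x
  have htotal : HasDerivAt (fun s => χ s x)
      (cross3 (T t x₀) (deriv (fun y => T t y) x₀)
        + ∫ s in x₀..x, deriv (fun τ' => T τ' s) t) t := by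
    rw [hfun2]
    exact (hF.const_add P).add hG
  rw [htotal.deriv, heval]
  abel
end
end

section
/- Let I, J ⊆ ℝ be open intervals, ψ : I × J → ℂ of class C¹, γ : I × J → ℝ continuous, and let T, e₁, e₂ : I × J → ℝ³ be C¹ maps satisfying, with N = e₁ + i e₂, the systems T_x = Re(conj(ψ) N), N_x = −ψ T, T_t = Im(conj(ψ_x) N), N_t = −i ψ_x T + i γ N on I × J. If (T, e₁, e₂)(t₀, x₀) is an orthonormal basis of ℝ³ for some (t₀, x₀) ∈ I × J, then (T, e₁, e₂)(t,x) is an orthonormal basis of ℝ³ for every (t,x) ∈ I × J. -/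
noncomputable section

/-- Orthonormality of a triple of vectors in ℝ³ (which is then automatically a basis). -/
def IsOrthonormalTriple (T e₁ e₂ : Fin 3 → ℝ) : Prop :=
  dot3 T T = 1 ∧ dot3 e₁ e₁ = 1 ∧ dot3 e₂ e₂ = 1 ∧
  dot3 T e₁ = 0 ∧ dot3 T e₂ = 0 ∧ dot3 e₁ e₂ = 0

/-!
If a frame moves by `F' = A F` with `A` skew-symmetric, its Gram matrix `G` moves by
`G' = A G - G A`, so the defect `∑ᵢⱼ (G - 1)ᵢⱼ²` has derivative
`2 tr((G - 1)(A(G - 1) - (G - 1)A))`, which vanishes by cyclicity of the trace. On an interval the defect is therefore constant, and zero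
once it vanishes at one point. With `N = e₁ + i e₂`, both systems of the theorem are of this form:
`T' = Re(conj a N)`, `N' = -a T + i r N` with `a = ψ`, `r = 0` along `x` and `a = i ψ_x`, `r = γ`
along `t`. Orthonormality is propagated first along `x` at `t₀`, then along `t` at every `x`.
-/

open scoped RealInnerProductSpace

section

open Matrix

variable {ι E : Type*} [NormedAddCommGroup E] [InnerProductSpace ℝ E]

theorem Matrix.transpose_gram (v : ι → E) : (gram ℝ v)ᵀ = gram ℝ v := by
  ext i j
  simp [gram_apply, real_inner_comm]

variable [Fintype ι] [DecidableEq ι]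

theorem Matrix.sum_sub_one_mul_mul_transpose_add_mul_eq_zero {R : Type*} [CommRing R]
    {G A : Matrix ι ι R} (hG : Gᵀ = G) (hA : Aᵀ = -A) :
    ∑ i, ∑ j, (G - 1) i j * ((G * Aᵀ) i j + (A * G) i j) = 0 := by
  set H := G - 1
  have hH : Hᵀ = H := by simp [H, hG]
  have hflow : G * Aᵀ + A * G = A * H - H * A := by
    simp only [H, hA, mul_sub, sub_mul, mul_neg, mul_one, one_mul]; abel
  calc ∑ i, ∑ j, H i j * ((G * Aᵀ) i j + (A * G) i j) = trace (Hᵀ * (G * Aᵀ + A * G)) := by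
        simp only [trace, diag, mul_apply, transpose_apply, add_apply]
        rw [Finset.sum_comm]
    _ = trace (H * A * H) - trace (H * H * A) := by
        rw [hH, hflow, mul_sub, trace_sub, mul_assoc, mul_assoc]
    _ = 0 := by rw [trace_mul_cycle, sub_self]

def orthonormalDefect (v : ι → E) : ℝ := ∑ i, ∑ j, (gram ℝ v - 1) i j ^ 2

theorem orthonormalDefect_eq_zero_iff {v : ι → E} :
    orthonormalDefect v = 0 ↔ Orthonormal ℝ v := by
  simp only [orthonormalDefect, Matrix.sub_apply, gram_apply, one_apply]
  rw [Finset.sum_eq_zero_iff_of_nonneg fun i _ => Finset.sum_nonneg fun j _ => sq_nonneg _]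
  simp_rw [Finset.sum_eq_zero_iff_of_nonneg fun j _ => sq_nonneg _]
  simp only [Finset.mem_univ, true_imp_iff, sq_eq_zero_iff, sub_eq_zero, orthonormal_iff_ite]

theorem hasDerivAt_orthonormalDefect {F : ℝ → ι → E} {F' : ι → E} {x : ℝ}
    (hF : ∀ i, HasDerivAt (fun y => F y i) (F' i) x) :
    HasDerivAt (fun y => orthonormalDefect (F y))
      (∑ i, ∑ j, 2 * (gram ℝ (F x) - 1) i j * (⟪F x i, F' j⟫ + ⟪F' i, F x j⟫)) x := by
  refine HasDerivAt.fun_sum fun i _ => HasDerivAt.fun_sum fun j _ => ?_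
  have h := (((hF i).inner ℝ (hF j)).sub_const ((1 : Matrix ι ι ℝ) i j)).fun_pow 2
  simp only [Matrix.sub_apply, gram_apply]
  exact h.congr_deriv (by norm_num)

theorem Orthonormal.of_hasDerivAt_skew {s : Set ℝ} (hs : IsOpen s) (hs' : IsPreconnected s)
    {F : ℝ → ι → E} {A : ℝ → Matrix ι ι ℝ} (hA : ∀ y ∈ s, (A y)ᵀ = -A y)
    (hF : ∀ y ∈ s, ∀ i, HasDerivAt (fun z => F z i) (∑ k, A y i k • F y k) y)
    {x₀ y : ℝ} (hx₀ : x₀ ∈ s) (hy : y ∈ s) (h₀ : Orthonormal ℝ (F x₀)) :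
    Orthonormal ℝ (F y) := by
  have hconst : ∀ z ∈ s, HasDerivAt (fun z => orthonormalDefect (F z)) 0 z := by
    intro z hz
    refine (hasDerivAt_orthonormalDefect (hF z hz)).congr_deriv ?_
    have hflow := sum_sub_one_mul_mul_transpose_add_mul_eq_zero (transpose_gram (F z)) (hA z hz)
    calc _ = 2 * ∑ i, ∑ j, (gram ℝ (F z) - 1) i j *
          ((gram ℝ (F z) * (A z)ᵀ) i j + (A z * gram ℝ (F z)) i j) := by
          simp only [Finset.mul_sum, mul_apply, transpose_apply, gram_apply, sum_inner, inner_sum,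
            real_inner_smul_left, real_inner_smul_right]
          refine Finset.sum_congr rfl fun i _ => Finset.sum_congr rfl fun j _ => ?_
          simp_rw [mul_comm (A z j _)]
          ring
      _ = 0 := by rw [hflow, mul_zero]
  rw [← orthonormalDefect_eq_zero_iff] at h₀ ⊢
  rw [← h₀]
  exact hs.is_const_of_deriv_eq_zero hs'
    (fun z hz => (hconst z hz).differentiableAt.differentiableWithinAt)
    (fun z hz => (hconst z hz).deriv) hy hx₀

theorem orthonormal_frame_of_hasDerivAt {s : Set ℝ} (hs : IsOpen s) (hs' : IsPreconnected s)
    {T e₁ e₂ : ℝ → E} {p q r : ℝ → ℝ}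
    (hT : ∀ y ∈ s, HasDerivAt T (p y • e₁ y + q y • e₂ y) y)
    (he₁ : ∀ y ∈ s, HasDerivAt e₁ (-p y • T y - r y • e₂ y) y)
    (he₂ : ∀ y ∈ s, HasDerivAt e₂ (-q y • T y + r y • e₁ y) y)
    {x₀ y : ℝ} (hx₀ : x₀ ∈ s) (hy : y ∈ s) (h₀ : Orthonormal ℝ ![T x₀, e₁ x₀, e₂ x₀]) :
    Orthonormal ℝ ![T y, e₁ y, e₂ y] := by
  refine Orthonormal.of_hasDerivAt_skew (F := fun z => ![T z, e₁ z, e₂ z])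
    (A := fun z => !![0, p z, q z; -p z, 0, -r z; -q z, r z, 0]) hs hs' ?_ ?_ hx₀ hy h₀
  · intro z _
    ext i j
    fin_cases i <;> fin_cases j <;> simp
  · intro z hz i
    fin_cases i
    · convert hT z hz using 1 <;> simp [Fin.sum_univ_three]
    · convert he₁ z hz using 1 <;> simp [Fin.sum_univ_three, sub_eq_add_neg]
    · convert he₂ z hz using 1 <;> simp [Fin.sum_univ_three]

end

theorem dot3_comm (a b : Fin 3 → ℝ) : dot3 a b = dot3 b a := by
  simp [dot3, mul_comm]

theorem isOrthonormalTriple_iff_orthonormal {T e₁ e₂ : Fin 3 → ℝ} :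
    IsOrthonormalTriple T e₁ e₂ ↔
      Orthonormal ℝ ![WithLp.toLp 2 T, WithLp.toLp 2 e₁, WithLp.toLp 2 e₂] := by
  have hdot : ∀ a b : Fin 3 → ℝ, ⟪WithLp.toLp 2 a, WithLp.toLp 2 b⟫ = dot3 a b := by
    simp [PiLp.inner_apply, dot3, mul_comm]
  simp [orthonormal_iff_ite, Fin.forall_fin_succ, hdot, IsOrthonormalTriple, dot3_comm e₁ T,
    dot3_comm e₂ T, dot3_comm e₂ e₁]
  tauto

theorem ContDiffOn.differentiableAt_partial {E : Type*} [NormedAddCommGroup E] [NormedSpace ℝ E]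
    {f : ℝ → ℝ → E} {I J : Set ℝ} (hI : IsOpen I) (hJ : IsOpen J)
    (hf : ContDiffOn ℝ 1 (fun p : ℝ × ℝ => f p.1 p.2) (I ×ˢ J)) {t x : ℝ} (ht : t ∈ I)
    (hx : x ∈ J) : DifferentiableAt ℝ (f · x) t ∧ DifferentiableAt ℝ (f t ·) x := by
  have hf' := (hf.differentiableOn one_ne_zero).differentiableAt
    ((hI.prod hJ).mem_nhds (Set.mk_mem_prod ht hx))
  exact ⟨hf'.comp (f := fun s => (s, x)) t (differentiableAt_id.prodMk (differentiableAt_const x)),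
    hf'.comp (f := fun y => (t, y)) x ((differentiableAt_const t).prodMk differentiableAt_id)⟩

section

open Complex ComplexConjugate Filter Topology

theorem hasDerivAt_re_im_of_deriv_eq {ι : Type*} [Fintype ι] {e₁ e₂ : ℝ → ι → ℝ}
    {N : ℝ → ι → ℂ} {x : ℝ} {D : ι → ℂ} (he₁ : DifferentiableAt ℝ e₁ x)
    (he₂ : DifferentiableAt ℝ e₂ x) (hN : N =ᶠ[𝓝 x] fun y i => e₁ y i + I * e₂ y i)
    (hD : deriv N x = D) :
    HasDerivAt e₁ (fun i => (D i).re) x ∧ HasDerivAt e₂ (fun i => (D i).im) x := by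
  have hN' : HasDerivAt N (fun i => (deriv e₁ x i : ℂ) + I * deriv e₂ x i) x := by
    refine HasDerivAt.congr_of_eventuallyEq (hasDerivAt_pi.2 fun i => ?_) hN
    exact (hasDerivAt_pi.1 he₁.hasDerivAt i).ofReal_comp.add
      ((hasDerivAt_pi.1 he₂.hasDerivAt i).ofReal_comp.const_mul I)
  rw [← hD, hN'.deriv]
  refine ⟨he₁.hasDerivAt.congr_deriv ?_, he₂.hasDerivAt.congr_deriv ?_⟩ <;> ext i <;> simp

theorem isOrthonormalTriple_of_complex_frame_eqs {s : Set ℝ} (hs : IsOpen s)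
    (hs' : IsPreconnected s) {a : ℝ → ℂ} {r : ℝ → ℝ} {T e₁ e₂ : ℝ → Fin 3 → ℝ}
    {N : ℝ → Fin 3 → ℂ} (hT : ∀ y ∈ s, DifferentiableAt ℝ T y)
    (he₁ : ∀ y ∈ s, DifferentiableAt ℝ e₁ y) (he₂ : ∀ y ∈ s, DifferentiableAt ℝ e₂ y)
    (hN : ∀ y ∈ s, ∀ i, N y i = e₁ y i + I * e₂ y i)
    (hT' : ∀ y ∈ s, deriv T y = fun i => (conj (a y) * N y i).re)
    (hN' : ∀ y ∈ s, deriv N y = fun i => -a y * T y i + I * r y * N y i)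
    {x₀ y : ℝ} (hx₀ : x₀ ∈ s) (hy : y ∈ s) (h₀ : IsOrthonormalTriple (T x₀) (e₁ x₀) (e₂ x₀)) :
    IsOrthonormalTriple (T y) (e₁ y) (e₂ y) := by
  have toLp_hasDerivAt {f : ℝ → Fin 3 → ℝ} {f' : Fin 3 → ℝ} {z : ℝ} (h : HasDerivAt f f' z) :
      HasDerivAt (fun w => WithLp.toLp 2 (f w)) (WithLp.toLp 2 f') z :=
    (PiLp.hasFDerivAt_toLp 2 (f z)).comp_hasDerivAt z h
  have hNre_im : ∀ z ∈ s, HasDerivAt e₁ (fun i => (deriv N z i).re) z ∧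
      HasDerivAt e₂ (fun i => (deriv N z i).im) z := fun z hz =>
    hasDerivAt_re_im_of_deriv_eq (he₁ z hz) (he₂ z hz)
      (eventually_of_mem (hs.mem_nhds hz) fun w hw => funext (hN w hw)) rfl
  rw [isOrthonormalTriple_iff_orthonormal] at h₀ ⊢
  refine orthonormal_frame_of_hasDerivAt (T := fun y => WithLp.toLp 2 (T y))
    (e₁ := fun y => WithLp.toLp 2 (e₁ y)) (e₂ := fun y => WithLp.toLp 2 (e₂ y))
    (p := fun y => (a y).re) (q := fun y => (a y).im) (r := r) hs hs' ?_ ?_ ?_ hx₀ hy h₀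
  · intro z hz
    refine (toLp_hasDerivAt (hT z hz).hasDerivAt).congr_deriv (PiLp.ext fun i => ?_)
    simp [hT' z hz, hN z hz i]
  · intro z hz
    refine (toLp_hasDerivAt (hNre_im z hz).1).congr_deriv (PiLp.ext fun i => ?_)
    simp [hN' z hz, hN z hz i]
    ring
  · intro z hz
    refine (toLp_hasDerivAt (hNre_im z hz).2).congr_deriv (PiLp.ext fun i => ?_)
    simp [hN' z hz, hN z hz i]

end

theorem stmt_2_general
    (I J : Set ℝ) (hIopen : IsOpen I) (hIint : I.OrdConnected)
    (hJopen : IsOpen J) (hJint : J.OrdConnected)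
    (ψ : ℝ → ℝ → ℂ) (γ : ℝ → ℝ → ℝ)
    (T e₁ e₂ : ℝ → ℝ → Fin 3 → ℝ) (N : ℝ → ℝ → Fin 3 → ℂ)
    (hTreg : ContDiffOn ℝ 1 (fun p : ℝ × ℝ => T p.1 p.2) (I ×ˢ J))
    (he₁reg : ContDiffOn ℝ 1 (fun p : ℝ × ℝ => e₁ p.1 p.2) (I ×ˢ J))
    (he₂reg : ContDiffOn ℝ 1 (fun p : ℝ × ℝ => e₂ p.1 p.2) (I ×ˢ J))
    -- N = e₁ + i e₂
    (hN : ∀ t ∈ I, ∀ x ∈ J, ∀ i : Fin 3,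
      N t x i = (e₁ t x i : ℂ) + Complex.I * (e₂ t x i : ℂ))
    -- the two first-order systems
    (hTx : ∀ t ∈ I, ∀ x ∈ J,
      deriv (fun y => T t y) x = fun i => ((starRingEnd ℂ) (ψ t x) * N t x i).re)
    (hNx : ∀ t ∈ I, ∀ x ∈ J,
      deriv (fun y => N t y) x = fun i => -(ψ t x) * (T t x i : ℂ))
    (hTt : ∀ t ∈ I, ∀ x ∈ J,
      deriv (fun s => T s x) t
        = fun i => ((starRingEnd ℂ) (deriv (fun y => ψ t y) x) * N t x i).im)
    (hNt : ∀ t ∈ I, ∀ x ∈ J,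
      deriv (fun s => N s x) t
        = fun i => -Complex.I * deriv (fun y => ψ t y) x * (T t x i : ℂ)
            + Complex.I * (γ t x : ℂ) * N t x i)
    (t₀ : ℝ) (ht₀ : t₀ ∈ I) (x₀ : ℝ) (hx₀ : x₀ ∈ J)
    (hON₀ : IsOrthonormalTriple (T t₀ x₀) (e₁ t₀ x₀) (e₂ t₀ x₀)) :
    ∀ t ∈ I, ∀ x ∈ J, IsOrthonormalTriple (T t x) (e₁ t x) (e₂ t x) := by
  have hON_t₀ : ∀ x ∈ J, IsOrthonormalTriple (T t₀ x) (e₁ t₀ x) (e₂ t₀ x) := fun x hx =>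
    isOrthonormalTriple_of_complex_frame_eqs (a := ψ t₀) (r := 0) hJopen hJint.isPreconnected
      (fun y hy => (hTreg.differentiableAt_partial hIopen hJopen ht₀ hy).2)
      (fun y hy => (he₁reg.differentiableAt_partial hIopen hJopen ht₀ hy).2)
      (fun y hy => (he₂reg.differentiableAt_partial hIopen hJopen ht₀ hy).2)
      (hN t₀ ht₀) (hTx t₀ ht₀) (fun y hy => by simp [hNx t₀ ht₀ y hy]) hx₀ hx hON₀
  intro t ht x hx
  exact isOrthonormalTriple_of_complex_frame_eqs
    (a := fun s => Complex.I * deriv (fun y => ψ s y) x) (r := fun s => γ s x)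
    hIopen hIint.isPreconnected
    (fun s hs => (hTreg.differentiableAt_partial hIopen hJopen hs hx).1)
    (fun s hs => (he₁reg.differentiableAt_partial hIopen hJopen hs hx).1)
    (fun s hs => (he₂reg.differentiableAt_partial hIopen hJopen hs hx).1)
    (fun s hs => hN s hs x hx) (fun s hs => by simp [hTt s hs x hx, sub_eq_add_neg])
    (fun s hs => by simp [hNt s hs x hx]) ht₀ ht (hON_t₀ x hx)

/-- **Propagation of orthonormality of the frame.** If `(T, e₁, e₂)` are `C¹` fields on
`I × J` satisfying, with `N = e₁ + i e₂`, the systems `T_x = Re(conj ψ · N)`, `N_x = −ψ T`,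
`T_t = Im(conj ψ_x · N)`, `N_t = −i ψ_x T + i γ N` (whose coefficient matrices are
skew-symmetric), and `(T,e₁,e₂)` is an orthonormal basis at one point `(t₀,x₀)`, then it is
an orthonormal basis everywhere on `I × J`. -/
theorem stmt_2
    (I J : Set ℝ) (hIopen : IsOpen I) (hIint : I.OrdConnected)
    (hJopen : IsOpen J) (hJint : J.OrdConnected)
    (ψ : ℝ → ℝ → ℂ) (γ : ℝ → ℝ → ℝ)
    (hψreg : ContDiffOn ℝ 1 (fun p : ℝ × ℝ => ψ p.1 p.2) (I ×ˢ J))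
    (hγcont : ContinuousOn (fun p : ℝ × ℝ => γ p.1 p.2) (I ×ˢ J))
    (T e₁ e₂ : ℝ → ℝ → Fin 3 → ℝ) (N : ℝ → ℝ → Fin 3 → ℂ)
    (hTreg : ContDiffOn ℝ 1 (fun p : ℝ × ℝ => T p.1 p.2) (I ×ˢ J))
    (he₁reg : ContDiffOn ℝ 1 (fun p : ℝ × ℝ => e₁ p.1 p.2) (I ×ˢ J))
    (he₂reg : ContDiffOn ℝ 1 (fun p : ℝ × ℝ => e₂ p.1 p.2) (I ×ˢ J))
    -- N = e₁ + i e₂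
    (hN : ∀ t ∈ I, ∀ x ∈ J, ∀ i : Fin 3,
      N t x i = (e₁ t x i : ℂ) + Complex.I * (e₂ t x i : ℂ))
    -- the two first-order systems
    (hTx : ∀ t ∈ I, ∀ x ∈ J,
      deriv (fun y => T t y) x = fun i => ((starRingEnd ℂ) (ψ t x) * N t x i).re)
    (hNx : ∀ t ∈ I, ∀ x ∈ J,
      deriv (fun y => N t y) x = fun i => -(ψ t x) * (T t x i : ℂ))
    (hTt : ∀ t ∈ I, ∀ x ∈ J,
      deriv (fun s => T s x) t
        = fun i => ((starRingEnd ℂ) (deriv (fun y => ψ t y) x) * N t x i).im)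
    (hNt : ∀ t ∈ I, ∀ x ∈ J,
      deriv (fun s => N s x) t
        = fun i => -Complex.I * deriv (fun y => ψ t y) x * (T t x i : ℂ)
            + Complex.I * (γ t x : ℂ) * N t x i)
    (t₀ : ℝ) (ht₀ : t₀ ∈ I) (x₀ : ℝ) (hx₀ : x₀ ∈ J)
    (hON₀ : IsOrthonormalTriple (T t₀ x₀) (e₁ t₀ x₀) (e₂ t₀ x₀)) :
    ∀ t ∈ I, ∀ x ∈ J, IsOrthonormalTriple (T t x) (e₁ t x) (e₂ t x) :=
  stmt_2_general I J hIopen hIint hJopen hJint ψ γ T e₁ e₂ N hTreg he₁reg he₂reg hN hTx hNx hTt hNt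
    t₀ ht₀ x₀ hx₀ hON₀
end
end

section
/- Let a > 0 and let u : [1,∞) × ℝ → ℂ be smooth, with u(t,·) a Schwartz function for every t ≥ 1 (with seminorms locally uniformly bounded in t), solving the linear equation i u_t + u_xx + a² t^{−1−2ia²} conj(u) = 0 on [1,∞) × ℝ, where t^{−1−2ia²} = t^{−1} e^{−2ia² log t}. Then for all t ≥ 1, ‖u(t,·)‖_{L²(ℝ)} ≤ t^{a²} ‖u(1,·)‖_{L²(ℝ)}. -/
open MeasureTheory

noncomputable section

namespace Stmt4Aux

open Complex SchwartzMap

lemma schwartz_decay (f : SchwartzMap ℝ ℂ) (x : ℝ) :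
    (1 + x ^ 2) * ‖f x‖ ≤ SchwartzMap.seminorm ℝ 0 0 f + SchwartzMap.seminorm ℝ 2 0 f := by
  have h0 := f.norm_le_seminorm ℝ x
  have h2 := SchwartzMap.le_seminorm' ℝ 2 0 f x
  rw [iteratedDeriv_zero] at h2
  have : |x| ^ 2 = x ^ 2 := sq_abs x
  nlinarith [norm_nonneg (f x)]

lemma decay_bound (f : SchwartzMap ℝ ℂ) {C1 C2 : ℝ}
    (h1 : SchwartzMap.seminorm ℝ 0 0 f ≤ C1) (h2 : SchwartzMap.seminorm ℝ 2 0 f ≤ C2)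
    (x : ℝ) : ‖f x‖ ≤ (C1 + C2) * (1 + x^2)⁻¹ := by
  have hd := schwartz_decay f x
  have hpos : (0:ℝ) < 1 + x^2 := by positivity
  have hle : (1 + x^2) * ‖f x‖ ≤ C1 + C2 := le_trans hd (add_le_add h1 h2)
  calc ‖f x‖ = ((1 + x^2) * ‖f x‖) * (1 + x^2)⁻¹ := by field_simp
    _ ≤ (C1 + C2) * (1 + x^2)⁻¹ := mul_le_mul_of_nonneg_right hle (by positivity)

lemma bdd_mul_integrable {g : ℝ → ℂ} (hg : Integrable g volume)
    {f : ℝ → ℂ} (hf : Continuous f) {C : ℝ} (hC : ∀ x, ‖f x‖ ≤ C) :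
    Integrable (fun x => f x * g x) volume :=
  hg.bdd_mul hf.aestronglyMeasurable (Filter.Eventually.of_forall hC)

lemma conj_integrable (f : SchwartzMap ℝ ℂ) :
    Integrable (fun x => (starRingEnd ℂ) (f x)) volume :=
  ((f.integrable (μ := volume)).norm).mono'
    (Complex.continuous_conj.comp f.continuous).aestronglyMeasurable
    (Filter.Eventually.of_forall fun x => by simp)

lemma sq_norm_integrable (f : SchwartzMap ℝ ℂ) :
    Integrable (fun x => ‖f x‖ ^ 2) volume := by
  have h : Integrable (fun x => ‖f x‖ * ‖f x‖) volume :=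
    (f.integrable (μ := volume)).norm.bdd_mul
      (f.continuous.norm.aestronglyMeasurable)
      (Filter.Eventually.of_forall fun x => by
        simpa using f.norm_le_seminorm ℝ x)
  simpa [sq] using h

lemma deriv_schwartz (f : SchwartzMap ℝ ℂ) : deriv (⇑f) = ⇑(SchwartzMap.derivCLM ℝ ℂ f) :=
  funext fun x => (SchwartzMap.derivCLM_apply ℝ f x).symm

lemma iteratedDeriv_two (f : ℝ → ℂ) : iteratedDeriv 2 f = deriv (deriv f) := by
  rw [iteratedDeriv_succ, iteratedDeriv_one]

lemma iteratedDeriv_two_schwartz (f : SchwartzMap ℝ ℂ) :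
    iteratedDeriv 2 (⇑f) = ⇑(SchwartzMap.derivCLM ℝ ℂ (SchwartzMap.derivCLM ℝ ℂ f)) := by
  rw [iteratedDeriv_two, deriv_schwartz f, deriv_schwartz]

lemma ibp_im (f : SchwartzMap ℝ ℂ) :
    (∫ x : ℝ, iteratedDeriv 2 (⇑f) x * (starRingEnd ℂ) (f x)).im = 0 := by
  have hd1 : deriv (⇑f) = ⇑(SchwartzMap.derivCLM ℝ ℂ f) := deriv_schwartz f
  have hd2 : deriv (deriv (⇑f)) = ⇑(SchwartzMap.derivCLM ℝ ℂ (SchwartzMap.derivCLM ℝ ℂ f)) := by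
    rw [hd1]; exact deriv_schwartz _
  have hC0 : ∀ x, ‖(starRingEnd ℂ) (f x)‖ ≤ SchwartzMap.seminorm ℝ 0 0 f := fun x => by
    simpa using f.norm_le_seminorm ℝ x
  have hu : ∀ x : ℝ, HasDerivAt (fun x => (starRingEnd ℂ) (f x))
      ((starRingEnd ℂ) (deriv (⇑f) x)) x :=
    fun x => (f.differentiableAt.hasDerivAt).star
  have hv : ∀ x : ℝ, HasDerivAt (deriv (⇑f)) (deriv (deriv (⇑f)) x) x := by
    intro x
    rw [hd1]
    exact (SchwartzMap.derivCLM ℝ ℂ f).differentiableAt.hasDerivAt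
  have hint1 : Integrable (fun x => (starRingEnd ℂ) (f x) * deriv (deriv (⇑f)) x) volume := by
    rw [hd2]
    exact bdd_mul_integrable (SchwartzMap.integrable _)
      (Complex.continuous_conj.comp f.continuous) hC0
  have hint2 : Integrable (fun x => (starRingEnd ℂ) (deriv (⇑f) x) * deriv (⇑f) x) volume := by
    rw [hd1]
    exact bdd_mul_integrable (SchwartzMap.integrable _)
      (Complex.continuous_conj.comp (SchwartzMap.derivCLM ℝ ℂ f).continuous)
      (fun x => by simpa using (SchwartzMap.derivCLM ℝ ℂ f).norm_le_seminorm ℝ x)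
  have hint3 : Integrable (fun x => (starRingEnd ℂ) (f x) * deriv (⇑f) x) volume := by
    rw [hd1]
    exact bdd_mul_integrable (SchwartzMap.integrable _)
      (Complex.continuous_conj.comp f.continuous) hC0
  have key := MeasureTheory.integral_mul_deriv_eq_deriv_mul_of_integrable
    (u := fun x => (starRingEnd ℂ) (f x)) (v := deriv (⇑f))
    (u' := fun x => (starRingEnd ℂ) (deriv (⇑f) x)) (v' := deriv (deriv (⇑f)))
    (fun x _ => hu x) (fun x _ => hv x) hint1 hint2 hint3
  have hmc : (∫ x : ℝ, iteratedDeriv 2 (⇑f) x * (starRingEnd ℂ) (f x))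
      = - ∫ x : ℝ, (starRingEnd ℂ) (deriv (⇑f) x) * deriv (⇑f) x := by
    rw [← key, iteratedDeriv_two]
    exact integral_congr_ae (Filter.Eventually.of_forall fun x => mul_comm _ _)
  rw [hmc]
  have heq2 : ∀ x : ℝ, (starRingEnd ℂ) (deriv (⇑f) x) * deriv (⇑f) x
      = ((Complex.normSq (deriv (⇑f) x) : ℝ) : ℂ) := by
    intro x; rw [mul_comm, Complex.mul_conj]
  rw [integral_congr_ae (Filter.Eventually.of_forall heq2)]
  have hre : Integrable (fun x : ℝ => ((Complex.normSq (deriv (⇑f) x) : ℝ) : ℂ)) volume :=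
    hint2.congr (Filter.Eventually.of_forall heq2)
  rw [Complex.neg_im, ← RCLike.im_to_complex, ← integral_im hre]
  simp

lemma hasDerivAt_sq_norm {f : ℝ → ℂ} {d : ℂ} {t : ℝ} (h : HasDerivAt f d t) :
    HasDerivAt (fun s => ‖f s‖^2) (2 * (d * (starRingEnd ℂ) (f t)).re) t := by
  have hmul : HasDerivAt (fun s => f s * (starRingEnd ℂ) (f s))
      (d * (starRingEnd ℂ) (f t) + f t * (starRingEnd ℂ) d) t := by
    have h2 : HasDerivAt (fun s => (starRingEnd ℂ) (f s)) ((starRingEnd ℂ) d) t := h.star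
    exact h.mul h2
  have hre := Complex.reCLM.hasFDerivAt.comp_hasDerivAt t hmul
  have hfun : (fun s => Complex.reCLM (f s * (starRingEnd ℂ) (f s))) = fun s => ‖f s‖^2 := by
    funext s
    simp [Complex.mul_conj, Complex.normSq_eq_norm_sq, ← Complex.ofReal_pow]
  have hval : Complex.reCLM (d * (starRingEnd ℂ) (f t) + f t * (starRingEnd ℂ) d)
      = 2 * (d * (starRingEnd ℂ) (f t)).re := by
    simp [Complex.add_re, Complex.mul_re, Complex.conj_re, Complex.conj_im]
    ring
  rw [← hfun, ← hval]
  exact hre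

end Stmt4Aux

open Stmt4Aux Complex

/-- **Polynomial L² bound for the linearized equation.** If `u` is a smooth solution on
`[1,∞) × ℝ`, Schwartz in `x` with locally uniformly bounded seminorms, of the linear
equation `i u_t + u_xx + a² t^{−1−2ia²} conj(u) = 0`, then
`‖u(t)‖_{L²} ≤ t^{a²} ‖u(1)‖_{L²}` for all `t ≥ 1`. -/
theorem stmt_4
    (a : ℝ) (ha : 0 < a) (u : ℝ → SchwartzMap ℝ ℂ)
    -- u is smooth on [1,∞) × ℝ
    (hreg : ContDiffOn ℝ (⊤ : ℕ∞) (fun p : ℝ × ℝ => u p.1 p.2) (Set.Ici 1 ×ˢ Set.univ))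
    -- the Schwartz seminorms are locally uniformly bounded in t
    (hbdd : ∀ k n : ℕ, ∀ T : ℝ, ∃ C : ℝ, ∀ t ∈ Set.Icc (1:ℝ) T,
      SchwartzMap.seminorm ℝ k n (u t) ≤ C)
    -- u solves i u_t + u_xx + a² t^{−1−2ia²} conj(u) = 0 on [1,∞) × ℝ
    (heq : ∀ t : ℝ, 1 ≤ t → ∀ x : ℝ,
      Complex.I * derivWithin (fun s => u s x) (Set.Ici 1) t
        + iteratedDeriv 2 (fun y => u t y) x
        + (a : ℂ) ^ 2 * (t : ℂ) ^ ((-1 : ℂ) - 2 * Complex.I * (a : ℂ) ^ 2)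
            * (starRingEnd ℂ) (u t x) = 0) :
    ∀ t : ℝ, 1 ≤ t →
      eLpNorm (fun x => u t x) 2 volume
        ≤ ENNReal.ofReal (t ^ (a ^ 2)) * eLpNorm (fun x => u 1 x) 2 volume := by
  classical
  set c : ℝ → ℂ := fun t => (a:ℂ)^2 * (t:ℂ) ^ ((-1 : ℂ) - 2 * Complex.I * (a : ℂ) ^ 2) with hc
  have hnormc : ∀ t : ℝ, 1 ≤ t → ‖c t‖ = a^2 * t⁻¹ := by
    intro t ht
    have ht0 : 0 < t := lt_of_lt_of_le one_pos ht
    rw [hc]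
    rw [norm_mul, Complex.norm_cpow_eq_rpow_re_of_pos ht0]
    have : ((-1 : ℂ) - 2 * Complex.I * (a : ℂ) ^ 2).re = -1 := by simp [← Complex.ofReal_pow]
    rw [this, Real.rpow_neg_one]
    simp
  have hnormc_le : ∀ t : ℝ, 1 ≤ t → ‖c t‖ ≤ a^2 := by
    intro t ht
    rw [hnormc t ht]
    have ht0 : 0 < t := lt_of_lt_of_le one_pos ht
    have h1 : t⁻¹ ≤ 1 := inv_le_one_of_one_le₀ ht
    nlinarith [sq_nonneg a]
  set d : ℝ → ℝ → ℂ := fun t x =>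
    Complex.I * iteratedDeriv 2 (⇑(u t)) x + Complex.I * (c t * (starRingEnd ℂ) (u t x)) with hdd
  -- Step A : time derivative
  have hut : ∀ t x : ℝ, 1 < t → HasDerivAt (fun s => u s x) (d t x) t := by
    intro t x ht
    have hmem : (Set.Ici (1:ℝ) ×ˢ (Set.univ : Set ℝ)) ∈ nhds (t, x) := by
      have h1 : (Set.Ioi (1:ℝ) ×ˢ (Set.univ : Set ℝ)) ∈ nhds (t, x) :=
        (isOpen_Ioi.prod isOpen_univ).mem_nhds ⟨ht, trivial⟩
      exact Filter.mem_of_superset h1 (Set.prod_mono Set.Ioi_subset_Ici_self subset_rfl)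
    have h1 : ContDiffAt ℝ (⊤ : ℕ∞) (fun p : ℝ × ℝ => u p.1 p.2) (t, x) := hreg.contDiffAt hmem
    have h2 : ContDiffAt ℝ (⊤ : ℕ∞) (fun s : ℝ => ((s, x) : ℝ × ℝ)) t :=
      contDiffAt_id.prodMk contDiffAt_const
    have hdiff : DifferentiableAt ℝ (fun s => u s x) t :=
      (h1.comp t h2 : ContDiffAt ℝ (⊤ : ℕ∞) ((fun p : ℝ × ℝ => u p.1 p.2) ∘ fun s => (s, x)) t).differentiableAt (by simp)
    have hW : derivWithin (fun s => u s x) (Set.Ici 1) t = deriv (fun s => u s x) t :=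
      derivWithin_of_mem_nhds (Ici_mem_nhds ht)
    have h0 := heq t ht.le x
    rw [hW] at h0
    have hsolve : deriv (fun s => u s x) t = d t x := by
      rw [hdd]
      linear_combination (-Complex.I) * h0 + (deriv (fun s => u s x) t) * Complex.I_mul_I
    rw [← hsolve]
    exact hdiff.hasDerivAt
  set G : ℝ → ℝ → ℝ := fun t x => 2 * (d t x * (starRingEnd ℂ) (u t x)).re with hG
  set E : ℝ → ℝ := fun t => ∫ x : ℝ, ‖u t x‖^2 with hEdef
  have hEnonneg : ∀ t, 0 ≤ E t :=
    fun t => integral_nonneg fun x => sq_nonneg _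
  have hsq : ∀ t x : ℝ, 1 < t → HasDerivAt (fun s => ‖u s x‖^2) (G t x) t :=
    fun t x ht => hasDerivAt_sq_norm (hut t x ht)
  have hGcont : ∀ t : ℝ, Continuous (fun x => G t x) := by
    intro t
    have h2 : Continuous (fun x => iteratedDeriv 2 (⇑(u t)) x) := by
      rw [iteratedDeriv_two_schwartz]
      exact (SchwartzMap.derivCLM ℝ ℂ (SchwartzMap.derivCLM ℝ ℂ (u t))).continuous
    have hconj : Continuous (fun x => (starRingEnd ℂ) (u t x)) :=
      Complex.continuous_conj.comp (u t).continuous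
    have hcd : Continuous (fun x => d t x) := by
      rw [hdd]
      exact (continuous_const.mul h2).add (continuous_const.mul (continuous_const.mul hconj))
    rw [hG]
    exact continuous_const.mul (Complex.continuous_re.comp (hcd.mul hconj))
  -- Step C : derivative of the energy
  have hE' : ∀ t : ℝ, 1 < t → HasDerivAt E (∫ x : ℝ, G t x) t := by
    intro t₀ ht₀
    set ε : ℝ := min ((t₀ - 1)/2) 1 with hεdef
    have hε : (0:ℝ) < ε := lt_min (by linarith) one_pos
    have hε1 : ε ≤ (t₀ - 1)/2 := min_le_left _ _
    have hε2 : ε ≤ 1 := min_le_right _ _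
    have hball : ∀ s ∈ Metric.ball t₀ ε, 1 < s ∧ s ≤ t₀ + 1 := by
      intro s hs
      rw [Metric.mem_ball, Real.dist_eq] at hs
      have h := abs_lt.mp hs
      exact ⟨by linarith [h.1, h.2], by linarith [h.1, h.2]⟩
    obtain ⟨C00, hC00⟩ := hbdd 0 0 (t₀ + 1)
    obtain ⟨C20, hC20⟩ := hbdd 2 0 (t₀ + 1)
    obtain ⟨C02, hC02⟩ := hbdd 0 2 (t₀ + 1)
    have ht₀mem : t₀ ∈ Set.Icc (1:ℝ) (t₀+1) := ⟨ht₀.le, by linarith⟩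
    have hC00nn : 0 ≤ C00 := le_trans (apply_nonneg _ _) (hC00 t₀ ht₀mem)
    set M : ℝ := 2 * ((C02 + a^2 * C00) * (C00 + C20)) with hM
    have key := hasDerivAt_integral_of_dominated_loc_of_deriv_le (μ := volume)
      (F := fun t x => ‖u t x‖^2) (F' := G) (x₀ := t₀)
      (bound := fun x => M * (1 + x^2)⁻¹) (Metric.ball_mem_nhds t₀ hε)
      (Filter.Eventually.of_forall fun t =>
        ((u t).continuous.norm.pow 2).aestronglyMeasurable)
      (sq_norm_integrable (u t₀))
      (hGcont t₀).aestronglyMeasurable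
      ?_ ?_ ?_
    · exact key.2
    · -- bound
      refine Filter.Eventually.of_forall fun x => fun t htball => ?_
      obtain ⟨ht1, ht2⟩ := hball t htball
      have htIcc : t ∈ Set.Icc (1:ℝ) (t₀+1) := ⟨ht1.le, ht2⟩
      have hb1 : ‖u t x‖ ≤ (C00 + C20) * (1 + x^2)⁻¹ :=
        decay_bound (u t) (hC00 t htIcc) (hC20 t htIcc) x
      have hb2 : ‖d t x‖ ≤ C02 + a^2 * C00 := by
        rw [hdd]
        calc ‖Complex.I * iteratedDeriv 2 (⇑(u t)) x
              + Complex.I * (c t * (starRingEnd ℂ) (u t x))‖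
            ≤ ‖Complex.I * iteratedDeriv 2 (⇑(u t)) x‖
              + ‖Complex.I * (c t * (starRingEnd ℂ) (u t x))‖ := norm_add_le _ _
          _ = ‖iteratedDeriv 2 (⇑(u t)) x‖ + ‖c t‖ * ‖u t x‖ := by
              simp [norm_mul]
          _ ≤ C02 + a^2 * C00 := by
              have h1 : ‖iteratedDeriv 2 (⇑(u t)) x‖ ≤ C02 := by
                have := SchwartzMap.le_seminorm' ℝ 0 2 (u t) x
                simp only [pow_zero, one_mul] at this
                exact le_trans this (hC02 t htIcc)
              have h2 : ‖c t‖ * ‖u t x‖ ≤ a^2 * C00 := by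
                apply mul_le_mul (hnormc_le t ht1.le)
                  (le_trans ((u t).norm_le_seminorm ℝ x) (hC00 t htIcc))
                  (norm_nonneg _) (sq_nonneg a)
              exact add_le_add h1 h2
      rw [hG]
      have h1 : |(d t x * (starRingEnd ℂ) (u t x)).re| ≤ ‖d t x‖ * ‖u t x‖ := by
        calc |(d t x * (starRingEnd ℂ) (u t x)).re| ≤ ‖d t x * (starRingEnd ℂ) (u t x)‖ :=
              Complex.abs_re_le_norm _
          _ = ‖d t x‖ * ‖u t x‖ := by simp [norm_mul]
      rw [Real.norm_eq_abs, abs_mul, show |(2:ℝ)| = 2 by norm_num]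
      have hdn : 0 ≤ ‖d t x‖ := norm_nonneg _
      have hun : 0 ≤ ‖u t x‖ := norm_nonneg _
      calc 2 * |(d t x * (starRingEnd ℂ) (u t x)).re| ≤ 2 * (‖d t x‖ * ‖u t x‖) := by
            linarith
        _ ≤ 2 * ((C02 + a^2 * C00) * ((C00 + C20) * (1 + x^2)⁻¹)) := by
            have := mul_le_mul hb2 hb1 hun (le_trans hdn hb2)
            linarith
        _ = M * (1 + x^2)⁻¹ := by rw [hM]; ring
    · exact (integrable_inv_one_add_sq).const_mul M
    · exact Filter.Eventually.of_forall fun x t htball => hsq t x (hball t htball).1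
  -- integrability pieces for Step D
  have hint1 : ∀ t : ℝ, Integrable (fun x =>
      Complex.I * (iteratedDeriv 2 (⇑(u t)) x * (starRingEnd ℂ) (u t x))) volume := by
    intro t
    have h : Integrable (fun x =>
        (starRingEnd ℂ) (u t x) * iteratedDeriv 2 (⇑(u t)) x) volume := by
      rw [iteratedDeriv_two_schwartz]
      exact bdd_mul_integrable (SchwartzMap.integrable _)
        (Complex.continuous_conj.comp (u t).continuous)
        (fun x => by simpa using (u t).norm_le_seminorm ℝ x)
    exact (h.const_mul Complex.I).congr
      (Filter.Eventually.of_forall fun x => by ring)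
  have hint2 : ∀ t : ℝ, Integrable (fun x =>
      Complex.I * (c t * ((starRingEnd ℂ) (u t x) * (starRingEnd ℂ) (u t x)))) volume := by
    intro t
    have h : Integrable (fun x =>
        (starRingEnd ℂ) (u t x) * (starRingEnd ℂ) (u t x)) volume :=
      bdd_mul_integrable (conj_integrable (u t))
        (Complex.continuous_conj.comp (u t).continuous)
        (fun x => by simpa using (u t).norm_le_seminorm ℝ x)
    exact ((h.const_mul (c t)).const_mul Complex.I)
  -- Step D : the derivative bound
  have hE'le : ∀ t : ℝ, 1 < t → (∫ x : ℝ, G t x) ≤ 2 * a^2 * t⁻¹ * E t := by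
    intro t ht
    have hsplit : ∀ x : ℝ, G t x
        = 2 * (Complex.I * (iteratedDeriv 2 (⇑(u t)) x * (starRingEnd ℂ) (u t x))).re
          + 2 * (Complex.I * (c t * ((starRingEnd ℂ) (u t x) * (starRingEnd ℂ) (u t x)))).re := by
      intro x
      simp only [hG, hdd]
      have hre : (Complex.I * iteratedDeriv 2 (⇑(u t)) x
            + Complex.I * (c t * (starRingEnd ℂ) (u t x))) * (starRingEnd ℂ) (u t x)
          = Complex.I * (iteratedDeriv 2 (⇑(u t)) x * (starRingEnd ℂ) (u t x))
            + Complex.I * (c t * ((starRingEnd ℂ) (u t x) * (starRingEnd ℂ) (u t x))) := by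
        ring
      rw [hre, Complex.add_re]
      ring
    have hIsum : (∫ x : ℝ, G t x)
        = (∫ x : ℝ, 2 * (Complex.I * (iteratedDeriv 2 (⇑(u t)) x * (starRingEnd ℂ) (u t x))).re)
          + ∫ x : ℝ, 2 * (Complex.I *
              (c t * ((starRingEnd ℂ) (u t x) * (starRingEnd ℂ) (u t x)))).re := by
      have hi1 : Integrable (fun x : ℝ => 2 * (Complex.I *
          (iteratedDeriv 2 (⇑(u t)) x * (starRingEnd ℂ) (u t x))).re) volume :=
        (hint1 t).re.const_mul 2
      have hi2 : Integrable (fun x : ℝ => 2 * (Complex.I *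
          (c t * ((starRingEnd ℂ) (u t x) * (starRingEnd ℂ) (u t x)))).re) volume :=
        (hint2 t).re.const_mul 2
      rw [← integral_add hi1 hi2]
      exact integral_congr_ae (Filter.Eventually.of_forall fun x => hsplit x)
    have hzero : (∫ x : ℝ,
        2 * (Complex.I * (iteratedDeriv 2 (⇑(u t)) x * (starRingEnd ℂ) (u t x))).re) = 0 := by
      rw [integral_const_mul]
      have h2 : (∫ x : ℝ,
          (Complex.I * (iteratedDeriv 2 (⇑(u t)) x * (starRingEnd ℂ) (u t x))).re)
          = (∫ x : ℝ,
            Complex.I * (iteratedDeriv 2 (⇑(u t)) x * (starRingEnd ℂ) (u t x))).re := by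
        rw [← RCLike.re_to_complex, ← integral_re (hint1 t)]
        rfl
      rw [h2, integral_const_mul, Complex.mul_re, Complex.I_re, Complex.I_im]
      have him := ibp_im (u t)
      rw [him]
      norm_num
    rw [hIsum, hzero, zero_add]
    have hmono : (∫ x : ℝ, 2 * (Complex.I *
          (c t * ((starRingEnd ℂ) (u t x) * (starRingEnd ℂ) (u t x)))).re)
        ≤ ∫ x : ℝ, 2 * a^2 * t⁻¹ * ‖u t x‖^2 := by
      apply integral_mono ((hint2 t).re.const_mul 2)
        (((sq_norm_integrable (u t)).const_mul _))
      intro x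
      have h1 : (Complex.I * (c t * ((starRingEnd ℂ) (u t x) * (starRingEnd ℂ) (u t x)))).re
          ≤ ‖c t‖ * ‖u t x‖^2 := by
        calc (Complex.I * (c t * ((starRingEnd ℂ) (u t x) * (starRingEnd ℂ) (u t x)))).re
            ≤ ‖Complex.I * (c t * ((starRingEnd ℂ) (u t x) * (starRingEnd ℂ) (u t x)))‖ :=
              Complex.re_le_norm _
          _ = ‖c t‖ * ‖u t x‖^2 := by
              simp [norm_mul, sq]
      have h2 : ‖c t‖ = a^2 * t⁻¹ := hnormc t ht.le
      rw [h2] at h1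
      show 2 * (Complex.I * (c t * ((starRingEnd ℂ) (u t x) * (starRingEnd ℂ) (u t x)))).re
          ≤ 2 * a^2 * t⁻¹ * ‖u t x‖^2
      nlinarith [sq_nonneg (‖u t x‖)]
    calc (∫ x : ℝ, 2 * (Complex.I *
          (c t * ((starRingEnd ℂ) (u t x) * (starRingEnd ℂ) (u t x)))).re)
        ≤ ∫ x : ℝ, 2 * a^2 * t⁻¹ * ‖u t x‖^2 := hmono
      _ = 2 * a^2 * t⁻¹ * E t := integral_const_mul _ _
  -- Step E : Gronwall via monotonicity
  have hmain : ∀ T : ℝ, 1 ≤ T → E T ≤ T ^ (2*a^2) * E 1 := by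
    intro T hT
    rcases eq_or_lt_of_le hT with hT1 | hT1
    · rw [← hT1, Real.one_rpow, one_mul]
    have hEcont : ContinuousOn E (Set.Icc 1 T) := by
      obtain ⟨C00, hC00⟩ := hbdd 0 0 T
      obtain ⟨C20, hC20⟩ := hbdd 2 0 T
      have hC00nn : 0 ≤ C00 := le_trans (apply_nonneg _ _) (hC00 1 ⟨le_refl _, hT⟩)
      rw [hEdef]
      apply continuousOn_of_dominated (bound := fun x => C00 * ((C00 + C20) * (1 + x^2)⁻¹))
      · exact fun s _ => ((u s).continuous.norm.pow 2).aestronglyMeasurable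
      · intro s hs
        refine Filter.Eventually.of_forall fun x => ?_
        have hb1 : ‖u s x‖ ≤ (C00 + C20) * (1 + x^2)⁻¹ :=
          decay_bound (u s) (hC00 s hs) (hC20 s hs) x
        have hb0 : ‖u s x‖ ≤ C00 := le_trans ((u s).norm_le_seminorm ℝ x) (hC00 s hs)
        have hun : 0 ≤ ‖u s x‖ := norm_nonneg _
        rw [Real.norm_eq_abs, _root_.abs_of_nonneg (sq_nonneg _), pow_two]
        exact mul_le_mul hb0 hb1 hun hC00nn
      · exact (integrable_inv_one_add_sq.const_mul _).const_mul C00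
      · refine Filter.Eventually.of_forall fun x => ?_
        have hcont : ContinuousOn (fun s : ℝ => (u s) x) (Set.Icc 1 T) := by
          have hmap : Set.MapsTo (fun s : ℝ => ((s, x) : ℝ × ℝ)) (Set.Icc 1 T)
              (Set.Ici 1 ×ˢ Set.univ) := fun s hs => ⟨hs.1, trivial⟩
          exact (hreg.continuousOn.comp
            ((continuous_id.prodMk continuous_const).continuousOn) hmap)
        exact (hcont.norm.pow 2)
    set F : ℝ → ℝ := fun s => s ^ (-(2*a^2)) * E s with hF
    have hFcont : ContinuousOn F (Set.Icc 1 T) := by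
      apply ContinuousOn.mul _ hEcont
      apply ContinuousOn.rpow_const continuousOn_id
      intro s hs
      exact Or.inl (by have := hs.1; positivity)
    have hFderiv : ∀ s ∈ Set.Ioo (1:ℝ) T, HasDerivAt F
        ((-(2*a^2)) * s ^ (-(2*a^2) - 1) * E s + s ^ (-(2*a^2)) * (∫ x : ℝ, G s x)) s := by
      intro s hs
      have hs0 : (0:ℝ) < s := lt_trans one_pos hs.1
      have h1 : HasDerivAt (fun y : ℝ => y ^ (-(2*a^2))) ((-(2*a^2)) * s ^ (-(2*a^2) - 1)) s :=
        Real.hasDerivAt_rpow_const (Or.inl (ne_of_gt hs0))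
      exact h1.mul (hE' s hs.1)
    have hFanti : AntitoneOn F (Set.Icc 1 T) := by
      apply antitoneOn_of_deriv_nonpos (convex_Icc 1 T) hFcont
      · rw [interior_Icc]
        intro s hs
        exact (hFderiv s hs).differentiableAt.differentiableWithinAt
      · rw [interior_Icc]
        intro s hs
        rw [(hFderiv s hs).deriv]
        have hs0 : (0:ℝ) < s := lt_trans one_pos hs.1
        have hrp : (0:ℝ) < s ^ (-(2*a^2)) := Real.rpow_pos_of_pos hs0 _
        have hsplit : s ^ (-(2*a^2) - 1) = s ^ (-(2*a^2)) * s⁻¹ := by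
          rw [show -(2*a^2) - 1 = -(2*a^2) + (-1) by ring, Real.rpow_add hs0,
            Real.rpow_neg_one]
        have hle := hE'le s hs.1
        have hEs := hEnonneg s
        rw [hsplit]
        have : (-(2*a^2)) * (s ^ (-(2*a^2)) * s⁻¹) * E s + s ^ (-(2*a^2)) * (∫ x : ℝ, G s x)
            ≤ (-(2*a^2)) * (s ^ (-(2*a^2)) * s⁻¹) * E s
              + s ^ (-(2*a^2)) * (2 * a^2 * s⁻¹ * E s) := by
          have := mul_le_mul_of_nonneg_left hle hrp.le
          linarith
        calc (-(2*a^2)) * (s ^ (-(2*a^2)) * s⁻¹) * E s + s ^ (-(2*a^2)) * (∫ x : ℝ, G s x)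
            ≤ (-(2*a^2)) * (s ^ (-(2*a^2)) * s⁻¹) * E s
              + s ^ (-(2*a^2)) * (2 * a^2 * s⁻¹ * E s) := this
          _ = 0 := by ring
    have hin1 : (1:ℝ) ∈ Set.Icc (1:ℝ) T := ⟨le_refl _, hT⟩
    have hinT : T ∈ Set.Icc (1:ℝ) T := ⟨hT, le_refl _⟩
    have hFT := hFanti hin1 hinT hT
    rw [hF] at hFT
    simp only [Real.one_rpow, one_mul] at hFT
    have hT0 : (0:ℝ) < T := lt_trans one_pos hT1
    have hTpos : (0:ℝ) < T ^ (2*a^2) := Real.rpow_pos_of_pos hT0 _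
    have hneg : T ^ (-(2*a^2)) = (T ^ (2*a^2))⁻¹ := by
      rw [Real.rpow_neg hT0.le]
    rw [hneg] at hFT
    calc E T = T ^ (2*a^2) * ((T ^ (2*a^2))⁻¹ * E T) := by
          field_simp
      _ ≤ T ^ (2*a^2) * E 1 := by
          exact mul_le_mul_of_nonneg_left hFT hTpos.le
  -- Step F : conclusion
  intro t ht
  have hmem2 : ∀ s : ℝ, MemLp (fun x => u s x) 2 volume :=
    fun s => (memLp_two_iff_integrable_sq_norm
      (u s).continuous.aestronglyMeasurable).mpr (sq_norm_integrable (u s))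
  rw [(hmem2 t).eLpNorm_eq_integral_rpow_norm two_ne_zero ENNReal.ofNat_ne_top,
    (hmem2 1).eLpNorm_eq_integral_rpow_norm two_ne_zero ENNReal.ofNat_ne_top]
  have htoReal : (2:ENNReal).toReal = 2 := by norm_num
  rw [htoReal]
  have hconv : ∀ s : ℝ, (∫ x : ℝ, ‖u s x‖ ^ (2:ℝ)) = E s := by
    intro s
    rw [hEdef]
    simp only []
    congr 1
    funext x
    rw [show ((2:ℝ)) = ((2:ℕ):ℝ) by norm_num, Real.rpow_natCast]
  rw [hconv t, hconv 1]
  have hle : E t ≤ t ^ (2*a^2) * E 1 := hmain t ht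
  have ht0 : (0:ℝ) < t := lt_of_lt_of_le one_pos ht
  have hfin : (E t) ^ (2⁻¹:ℝ) ≤ t ^ (a^2) * (E 1) ^ (2⁻¹:ℝ) := by
    calc (E t) ^ (2⁻¹:ℝ) ≤ (t ^ (2*a^2) * E 1) ^ (2⁻¹:ℝ) :=
          Real.rpow_le_rpow (hEnonneg t) hle (by norm_num)
      _ = (t ^ (2*a^2)) ^ (2⁻¹:ℝ) * (E 1) ^ (2⁻¹:ℝ) :=
          Real.mul_rpow (Real.rpow_nonneg ht0.le _) (hEnonneg 1)
      _ = t ^ (a^2) * (E 1) ^ (2⁻¹:ℝ) := by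
          rw [← Real.rpow_mul ht0.le, show (2*a^2) * (2⁻¹:ℝ) = a^2 by ring]
  calc ENNReal.ofReal ((E t) ^ (2⁻¹:ℝ))
      ≤ ENNReal.ofReal (t ^ (a^2) * (E 1) ^ (2⁻¹:ℝ)) := ENNReal.ofReal_le_ofReal hfin
    _ = ENNReal.ofReal (t ^ (a^2)) * ENNReal.ofReal ((E 1) ^ (2⁻¹:ℝ)) :=
        ENNReal.ofReal_mul (Real.rpow_nonneg ht0.le _)
end
end

section
/- Let a > 0 and δ > 0. There exists a constant C(δ) > 0, depending only on a and δ, such that for every ξ ∈ ℝ and every pair of C¹ functions f, g : [1,∞) → ℂ satisfying the system f'(t) = −i ξ² f(t) + i a² t^{−1−2ia²} conj(g(t)) and g'(t) = −i ξ² g(t) + i a² t^{−1−2ia²} conj(f(t)), one has |f(t)| ≤ C(δ) t^{δ} (|f(1)| + |g(1)|) for all t ≥ 1. -/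
/-!
Adding and subtracting the two equations decouples the system: `f + g` and `i (f - g)` both solve
`p' = -iξ²p + ia² t^{-1-2ia²} conj p`. After the gauge change `W = t^{ia²} p`, the real part and
the negated imaginary part of `W` solve the real system `x' = -λy`, `y' = (λ - 2a²/t) x` with
`λ = ξ²`, whose energy `x² + y²` is controlled by Grönwall's inequality on three consecutive
regions. While `λ(t - 1) ≤ 2a²` the weighted energy `x² + y²/(1 + log T)` grows at most like
`(1 + log T) exp(4a²√(1 + log T))`; on the next stretch of length `2a²/λ` the energy grows by at
most `exp(2a²)`; once `λt ≥ 4a²` the adiabatic invariant `(λ - 2a²/t) x² + λy²` changes by at most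
a factor `e`. All bounds are uniform in `λ`, and `exp(c√(log t)) ≤ C_δ t^δ` for every `δ > 0`.
-/

open Set Real

theorem le_mul_exp_sub_of_hasDerivWithinAt_le_mul {E e G g : ℝ → ℝ} {s T : ℝ} (hsT : s ≤ T)
    (hE : ∀ t ∈ Icc s T, HasDerivWithinAt E (e t) (Icc s T) t)
    (hG : ∀ t ∈ Icc s T, HasDerivWithinAt G (g t) (Icc s T) t)
    (hle : ∀ t ∈ Icc s T, e t ≤ g t * E t) :
    E T ≤ E s * exp (G T - G s) := by
  have hF : ∀ t ∈ Icc s T, HasDerivWithinAt (fun t => E t * exp (-G t))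
      (e t * exp (-G t) + E t * (exp (-G t) * -g t)) (Icc s T) t :=
    fun t ht => (hE t ht).mul (hG t ht).neg.exp
  have hanti : AntitoneOn (fun t => E t * exp (-G t)) (Icc s T) := by
    refine antitoneOn_of_hasDerivWithinAt_nonpos (convex_Icc s T)
      (fun t ht => (hF t ht).continuousWithinAt)
      (fun t ht => (hF t (interior_subset ht)).mono interior_subset) fun t ht => ?_
    nlinarith [hle t (interior_subset ht), exp_pos (-G t)]
  have hST := hanti (left_mem_Icc.2 hsT) (right_mem_Icc.2 hsT) hsT
  calc E T = E T * exp (-G T) * exp (G T) := by rw [mul_assoc, ← exp_add]; simp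
    _ ≤ E s * exp (-G s) * exp (G T) := by gcongr
    _ = E s * exp (G T - G s) := by rw [mul_assoc, ← exp_add, neg_add_eq_sub]

theorem two_mul_mul_mul_le_of_abs_le {x z m M : ℝ} (hm : |m| ≤ M) :
    2 * x * z * m ≤ M * (x ^ 2 + z ^ 2) := by
  obtain ⟨h1, h2⟩ := abs_le.1 hm
  nlinarith [mul_nonneg (by linarith : 0 ≤ M + m) (sq_nonneg (x - z)),
    mul_nonneg (by linarith : 0 ≤ M - m) (sq_nonneg (x + z))]

noncomputable def logGrowth (a t : ℝ) : ℝ := (1 + log t) * exp (4 * a ^ 2 * √(1 + log t))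

theorem one_le_logGrowth {a t : ℝ} (ht : 1 ≤ t) : 1 ≤ logGrowth a t :=
  one_le_mul_of_one_le_of_one_le (by linarith [log_nonneg ht]) (one_le_exp (by positivity))

theorem logGrowth_mono {a s t : ℝ} (hs : 1 ≤ s) (hst : s ≤ t) : logGrowth a s ≤ logGrowth a t := by
  have hlog : log s ≤ log t := log_le_log (by linarith) hst
  unfold logGrowth
  gcongr
  · linarith [log_nonneg hs]

theorem logGrowth_le_exp {a t : ℝ} (ht : 1 ≤ t) :
    logGrowth a t ≤ exp (2 * (2 * a ^ 2 + 1) * √(1 + log t)) := by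
  set s := √(1 + log t)
  have hs : 0 ≤ s := sqrt_nonneg _
  have hss : s ^ 2 = 1 + log t := sq_sqrt (by linarith [log_nonneg ht])
  have hse : s ≤ exp s := by linarith [add_one_le_exp s]
  calc logGrowth a t = s ^ 2 * exp (4 * a ^ 2 * s) := by rw [logGrowth, hss]
    _ ≤ exp s ^ 2 * exp (4 * a ^ 2 * s) := by gcongr
    _ = exp (2 * (2 * a ^ 2 + 1) * s) := by
        rw [← exp_nat_mul, ← exp_add]; push_cast; ring_nf

theorem exp_mul_sqrt_one_add_log_le {k δ t : ℝ} (hk : 0 ≤ k) (hδ : 0 < δ) (ht : 1 ≤ t) :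
    exp (k * √(1 + log t)) ≤ exp (k + k ^ 2 / (4 * δ)) * t ^ δ := by
  have hlog : 0 ≤ log t := log_nonneg ht
  have hsqrt : √(1 + log t) ≤ 1 + √(log t) := by
    rw [sqrt_le_left (by positivity)]
    nlinarith [sq_sqrt hlog, sqrt_nonneg (log t)]
  have hamgm : k * √(log t) ≤ k ^ 2 / (4 * δ) + δ * log t := by
    rw [div_add' _ _ _ (by positivity), le_div_iff₀ (by positivity)]
    have hsq : δ ^ 2 * √(log t) ^ 2 = δ ^ 2 * log t := by rw [sq_sqrt hlog]
    nlinarith [sq_nonneg (k - 2 * δ * √(log t))]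
  rw [rpow_def_of_pos (by linarith), ← exp_add]
  gcongr
  nlinarith [mul_le_mul_of_nonneg_left hsqrt hk]

def ReducedSolution (a lam : ℝ) (x y : ℝ → ℝ) (S : Set ℝ) : Prop :=
  ∀ t ∈ S, HasDerivWithinAt x (-lam * y t) S t ∧
    HasDerivWithinAt y ((lam - 2 * a ^ 2 / t) * x t) S t

namespace ReducedSolution

variable {a lam : ℝ} {x y : ℝ → ℝ}

theorem mono {S S' : Set ℝ} (h : ReducedSolution a lam x y S) (hS : S' ⊆ S) :
    ReducedSolution a lam x y S' :=
  fun t ht => ⟨(h t (hS ht)).1.mono hS, (h t (hS ht)).2.mono hS⟩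

theorem hasDerivWithinAt_sq_add_mul_sq {S : Set ℝ} (h : ReducedSolution a lam x y S) (c : ℝ)
    {t : ℝ} (ht : t ∈ S) :
    HasDerivWithinAt (fun t => x t ^ 2 + c * y t ^ 2)
      (2 * (c * (lam - 2 * a ^ 2 / t) - lam) * x t * y t) S t := by
  refine (((h t ht).1.pow 2).add (((h t ht).2.pow 2).const_mul c)).congr_deriv ?_
  push_cast
  ring

theorem sq_add_sq_le_logGrowth (hlam : 0 ≤ lam) {T : ℝ} (hT : 1 ≤ T)
    (h : ReducedSolution a lam x y (Icc 1 T)) (hlamT : lam * (T - 1) ≤ 2 * a ^ 2) :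
    x T ^ 2 + y T ^ 2 ≤ logGrowth a T * (x 1 ^ 2 + y 1 ^ 2) := by
  set u := 1 + log T with hu_def
  have hu : 1 ≤ u := by linarith [log_nonneg hT]
  have hsqrt : 1 ≤ √u := one_le_sqrt.2 hu
  -- with the weight `B = u^{-1/2}` on `y`, the Grönwall rate `L + 2a²B/t` integrates to `≤ 4a²√u`
  set B := (√u)⁻¹
  have hB : 0 < B := by positivity
  have hB1 : B ≤ 1 := inv_le_one_of_one_le₀ hsqrt
  have hBu : B ^ 2 * u = 1 := by
    rw [inv_pow, sq_sqrt (by linarith), inv_mul_cancel₀ (by linarith)]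
  set L := lam * √u
  have hL : 0 ≤ L := by positivity
  have hLB2 : L * B ^ 2 ≤ L := mul_le_of_le_one_right hL (pow_le_one₀ hB.le hB1)
  have hLB : L * B = lam := by simp [L, B, (by linarith : (0:ℝ) < √u).ne']
  have hgron := le_mul_exp_sub_of_hasDerivWithinAt_le_mul hT
    (fun t ht => h.hasDerivWithinAt_sq_add_mul_sq (B ^ 2) ht)
    (G := fun t => L * t + 2 * a ^ 2 * B * log t) (g := fun t => L + 2 * a ^ 2 / t * B)
    (fun t ht => by
      have ht0 : t ≠ 0 := by linarith [ht.1]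
      refine (((hasDerivWithinAt_id t _).const_mul L).add
        ((hasDerivAt_log ht0).hasDerivWithinAt.const_mul (2 * a ^ 2 * B))).congr_deriv ?_
      field_simp)
    (fun t ht => by
      have hA : 0 ≤ 2 * a ^ 2 / t * B := by have := ht.1; positivity
      have hm : |L * B ^ 2 - 2 * a ^ 2 / t * B - L| ≤ L + 2 * a ^ 2 / t * B := by
        rw [abs_le]; constructor <;> nlinarith
      calc _ = 2 * x t * (B * y t) * (L * B ^ 2 - 2 * a ^ 2 / t * B - L) := by
            rw [← hLB]; ring
        _ ≤ _ := (two_mul_mul_mul_le_of_abs_le hm).trans_eq (by ring))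
  have hexp : L * T + 2 * a ^ 2 * B * log T - (L * 1 + 2 * a ^ 2 * B * log 1)
      ≤ 4 * a ^ 2 * √u := by
    have hBlog : B * log T ≤ √u := by
      rw [inv_mul_le_iff₀ (by positivity), mul_self_sqrt (by linarith)]
      linarith
    have : L * (T - 1) ≤ 2 * a ^ 2 * √u := by
      simpa only [L, mul_right_comm lam] using mul_le_mul_of_nonneg_right hlamT (sqrt_nonneg u)
    rw [log_one]
    nlinarith [mul_le_mul_of_nonneg_left hBlog (by positivity : 0 ≤ 2 * a ^ 2)]
  calc x T ^ 2 + y T ^ 2 ≤ u * (x T ^ 2 + B ^ 2 * y T ^ 2) := by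
        nlinarith [sq_nonneg (x T)]
    _ ≤ u * ((x 1 ^ 2 + B ^ 2 * y 1 ^ 2) * exp (4 * a ^ 2 * √u)) := by
        gcongr
        exact hgron.trans (by gcongr)
    _ = logGrowth a T * (x 1 ^ 2 + B ^ 2 * y 1 ^ 2) := by rw [logGrowth, ← hu_def]; ring
    _ ≤ logGrowth a T * (x 1 ^ 2 + y 1 ^ 2) := by
        have := one_le_logGrowth (a := a) hT
        gcongr
        nlinarith [pow_le_one₀ (n := 2) hB.le hB1, sq_nonneg (y 1)]

theorem sq_add_sq_le_mul_exp {s T : ℝ} (hs : 0 < s) (hsT : s ≤ T)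
    (h : ReducedSolution a lam x y (Icc s T)) (hlams : 2 * a ^ 2 ≤ lam * s) :
    x T ^ 2 + y T ^ 2 ≤ (x s ^ 2 + y s ^ 2) * exp (lam * (T - s)) := by
  have hlam : 0 ≤ lam := by nlinarith
  have hgron := le_mul_exp_sub_of_hasDerivWithinAt_le_mul hsT
    (fun t ht => h.hasDerivWithinAt_sq_add_mul_sq 1 ht)
    (G := fun t => lam * t) (g := fun _ => lam)
    (fun t _ => ((hasDerivWithinAt_id t _).const_mul lam).congr_deriv (mul_one lam))
    (fun t ht => by
      have ht0 : 0 < t := hs.trans_le ht.1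
      have hA : 0 ≤ 2 * a ^ 2 / t := by positivity
      have hAlam : 2 * a ^ 2 / t ≤ lam := by
        rw [div_le_iff₀ ht0]; nlinarith [ht.1]
      nlinarith [mul_nonneg hA (sq_nonneg (x t + y t)),
        mul_nonneg (sub_nonneg.2 hAlam) (add_nonneg (sq_nonneg (x t)) (sq_nonneg (y t)))])
  simpa [mul_sub] using hgron

theorem hasDerivWithinAt_adiabatic_energy {S : Set ℝ} (h : ReducedSolution a lam x y S) {t : ℝ}
    (ht : t ∈ S) (ht0 : t ≠ 0) :
    HasDerivWithinAt (fun t => (lam - 2 * a ^ 2 / t) * x t ^ 2 + lam * y t ^ 2)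
      (2 * a ^ 2 / t ^ 2 * x t ^ 2) S t := by
  have hcoef : HasDerivWithinAt (fun t => lam - 2 * a ^ 2 / t) (2 * a ^ 2 / t ^ 2) S t := by
    simp only [div_eq_mul_inv]
    refine (((hasDerivAt_inv ht0).const_mul _).const_sub lam).hasDerivWithinAt.congr_deriv ?_
    ring
  refine ((hcoef.mul ((h t ht).1.pow 2)).add (((h t ht).2.pow 2).const_mul lam)).congr_deriv ?_
  push_cast [Pi.pow_apply]
  ring

theorem sq_add_sq_le_two_mul_exp_one {s T : ℝ} (hs : 0 < s) (hsT : s ≤ T) (hlam : 0 < lam)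
    (h : ReducedSolution a lam x y (Icc s T)) (hlams : 4 * a ^ 2 ≤ lam * s) :
    x T ^ 2 + y T ^ 2 ≤ 2 * exp 1 * (x s ^ 2 + y s ^ 2) := by
  have hA : ∀ t, s ≤ t → 2 * a ^ 2 / t ≤ lam / 2 := fun t ht => by
    rw [div_le_iff₀ (hs.trans_le ht)]; nlinarith
  set N := fun t => (lam - 2 * a ^ 2 / t) * x t ^ 2 + lam * y t ^ 2
  have hgron := le_mul_exp_sub_of_hasDerivWithinAt_le_mul hsT (E := N)
    (e := fun t => 2 * a ^ 2 / t ^ 2 * x t ^ 2)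
    (G := fun t => -(4 * a ^ 2 / lam) * t⁻¹) (g := fun t => 4 * a ^ 2 / (lam * t ^ 2))
    (fun t ht => h.hasDerivWithinAt_adiabatic_energy ht (hs.trans_le ht.1).ne')
    (fun t ht => by
      have ht0 : t ≠ 0 := (hs.trans_le ht.1).ne'
      refine ((hasDerivAt_inv ht0).hasDerivWithinAt.const_mul _).congr_deriv ?_
      field_simp)
    (fun t ht => by
      have ht0 : 0 < t := hs.trans_le ht.1
      have hAt := hA t ht.1
      calc 2 * a ^ 2 / t ^ 2 * x t ^ 2 = 4 * a ^ 2 / (lam * t ^ 2) * (lam / 2 * x t ^ 2) := by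
            field_simp; ring
        _ ≤ 4 * a ^ 2 / (lam * t ^ 2) * N t := by
            gcongr
            nlinarith [sq_nonneg (x t), sq_nonneg (y t)])
  have hG : -(4 * a ^ 2 / lam) * T⁻¹ - -(4 * a ^ 2 / lam) * s⁻¹ ≤ 1 := by
    have hT : 0 < T⁻¹ := inv_pos.2 (hs.trans_le hsT)
    have : 4 * a ^ 2 / lam * s⁻¹ ≤ 1 := by
      rw [div_mul_eq_mul_div, div_le_one hlam, ← div_eq_mul_inv, div_le_iff₀ hs]; linarith
    nlinarith [div_nonneg (by positivity : 0 ≤ 4 * a ^ 2) hlam.le]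
  have hNT : lam / 2 * (x T ^ 2 + y T ^ 2) ≤ N T := by
    have := hA T hsT
    nlinarith [sq_nonneg (x T), sq_nonneg (y T)]
  have hNs : N s ≤ lam * (x s ^ 2 + y s ^ 2) := by
    have : 0 ≤ 2 * a ^ 2 / s := by positivity
    nlinarith [sq_nonneg (x s)]
  have hNs0 : 0 ≤ N s := by
    have := hA s le_rfl
    nlinarith [sq_nonneg (x s), sq_nonneg (y s)]
  refine le_of_mul_le_mul_left ?_ (half_pos hlam)
  calc lam / 2 * (x T ^ 2 + y T ^ 2) ≤ N s * exp 1 :=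
        hNT.trans (hgron.trans (by gcongr))
    _ ≤ lam * (x s ^ 2 + y s ^ 2) * exp 1 := by gcongr
    _ = lam / 2 * (2 * exp 1 * (x s ^ 2 + y s ^ 2)) := by ring

theorem sq_add_sq_le_of_two_mul_sq_le_mul {s T : ℝ} (hs : 0 < s) (hsT : s ≤ T)
    (h : ReducedSolution a lam x y (Icc s T)) (hlams : 2 * a ^ 2 ≤ lam * s) :
    x T ^ 2 + y T ^ 2 ≤ 2 * exp (1 + 2 * a ^ 2) * (x s ^ 2 + y s ^ 2) := by
  by_cases hshort : lam * (T - s) ≤ 2 * a ^ 2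
  · calc x T ^ 2 + y T ^ 2 ≤ (x s ^ 2 + y s ^ 2) * exp (lam * (T - s)) :=
          h.sq_add_sq_le_mul_exp hs hsT hlams
      _ ≤ (x s ^ 2 + y s ^ 2) * (2 * exp (1 + 2 * a ^ 2)) := by
          gcongr
          linarith [exp_le_exp.2 (by linarith : lam * (T - s) ≤ 1 + 2 * a ^ 2),
            exp_pos (1 + 2 * a ^ 2)]
      _ = 2 * exp (1 + 2 * a ^ 2) * (x s ^ 2 + y s ^ 2) := mul_comm _ _
  · rw [not_le] at hshort
    have hlam : 0 < lam := by nlinarith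
    set r := s + 2 * a ^ 2 / lam with hr
    have hlamr : lam * (r - s) = 2 * a ^ 2 := by
      rw [hr, add_sub_cancel_left, mul_div_cancel₀ _ hlam.ne']
    have hsr : s ≤ r := le_add_of_nonneg_right (by positivity)
    have hrT : r ≤ T := by nlinarith
    have hmid := (h.mono (Icc_subset_Icc le_rfl hrT)).sq_add_sq_le_mul_exp hs hsr hlams
    have hell := (h.mono (Icc_subset_Icc hsr le_rfl)).sq_add_sq_le_two_mul_exp_one
      (hs.trans_le hsr) hrT hlam (by nlinarith)
    rw [hlamr] at hmid
    calc x T ^ 2 + y T ^ 2 ≤ 2 * exp 1 * (x r ^ 2 + y r ^ 2) := hell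
      _ ≤ 2 * exp 1 * ((x s ^ 2 + y s ^ 2) * exp (2 * a ^ 2)) := by gcongr
      _ = 2 * exp (1 + 2 * a ^ 2) * (x s ^ 2 + y s ^ 2) := by rw [exp_add]; ring

theorem sq_add_sq_le (hlam : 0 ≤ lam) (h : ReducedSolution a lam x y (Ici 1)) {T : ℝ}
    (hT : 1 ≤ T) :
    x T ^ 2 + y T ^ 2 ≤ 2 * exp (1 + 2 * a ^ 2) * logGrowth a T * (x 1 ^ 2 + y 1 ^ 2) := by
  have hK : 1 ≤ 2 * exp (1 + 2 * a ^ 2) := by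
    linarith [one_le_exp (by positivity : 0 ≤ 1 + 2 * a ^ 2)]
  by_cases hshort : lam * (T - 1) ≤ 2 * a ^ 2
  · calc x T ^ 2 + y T ^ 2 ≤ logGrowth a T * (x 1 ^ 2 + y 1 ^ 2) :=
          (h.mono Icc_subset_Ici_self).sq_add_sq_le_logGrowth hlam hT hshort
      _ ≤ 2 * exp (1 + 2 * a ^ 2) * logGrowth a T * (x 1 ^ 2 + y 1 ^ 2) := by
          rw [mul_assoc]
          exact le_mul_of_one_le_left
            (mul_nonneg (zero_le_one.trans (one_le_logGrowth hT)) (by positivity)) hK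
  · rw [not_le] at hshort
    have hlam : 0 < lam := by nlinarith
    set s := 1 + 2 * a ^ 2 / lam with hs_def
    have hlams : lam * (s - 1) = 2 * a ^ 2 := by
      rw [hs_def, add_sub_cancel_left, mul_div_cancel₀ _ hlam.ne']
    have hs : 1 ≤ s := le_add_of_nonneg_right (by positivity)
    have hsT : s ≤ T := by nlinarith
    have hhyp := (h.mono Icc_subset_Ici_self).sq_add_sq_le_logGrowth hlam.le hs hlams.le
    have hpost := (h.mono (Icc_subset_Ici_self.trans (Ici_subset_Ici.2 hs)))
      |>.sq_add_sq_le_of_two_mul_sq_le_mul (by linarith) hsT (by nlinarith)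
    calc x T ^ 2 + y T ^ 2 ≤ 2 * exp (1 + 2 * a ^ 2) * (x s ^ 2 + y s ^ 2) := hpost
      _ ≤ 2 * exp (1 + 2 * a ^ 2) * (logGrowth a s * (x 1 ^ 2 + y 1 ^ 2)) := by gcongr
      _ ≤ 2 * exp (1 + 2 * a ^ 2) * (logGrowth a T * (x 1 ^ 2 + y 1 ^ 2)) := by
          gcongr
          exact logGrowth_mono hs hsT
      _ = 2 * exp (1 + 2 * a ^ 2) * logGrowth a T * (x 1 ^ 2 + y 1 ^ 2) := by ring

end ReducedSolution

open Complex ComplexConjugate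

theorem reducedSolution_re_neg_im {a lam : ℝ} {W : ℝ → ℂ} {S : Set ℝ}
    (hW : ∀ t ∈ S, HasDerivWithinAt W
      (-(I * ↑(lam - a ^ 2 / t)) * W t + I * ↑(a ^ 2 / t) * conj (W t)) S t) :
    ReducedSolution a lam (fun t => (W t).re) (fun t => -(W t).im) S := by
  intro t ht
  constructor
  · refine (reCLM.hasFDerivAt.comp_hasDerivWithinAt t (hW t ht)).congr_deriv ?_
    simp only [reCLM_apply, add_re, mul_re, neg_re, neg_im, mul_im, I_re, I_im, ofReal_re,
      ofReal_im, conj_re, conj_im]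
    ring
  · refine (imCLM.hasFDerivAt.comp_hasDerivWithinAt t (hW t ht)).neg.congr_deriv ?_
    simp only [imCLM_apply, add_im, mul_re, neg_re, neg_im, mul_im, I_re, I_im, ofReal_re,
      ofReal_im, conj_re, conj_im]
    ring

noncomputable def modeRHS (a ξ t : ℝ) (u v : ℂ) : ℂ :=
  -(I * (ξ : ℂ) ^ 2) * u + I * (a : ℂ) ^ 2 * (t : ℂ) ^ (-1 - 2 * I * (a : ℂ) ^ 2) * conj v

theorem modeRHS_add_swap (a ξ t : ℝ) (u v : ℂ) :
    modeRHS a ξ t u v + modeRHS a ξ t v u = modeRHS a ξ t (u + v) (u + v) := by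
  simp only [modeRHS, map_add]
  ring

theorem I_mul_modeRHS_sub_swap (a ξ t : ℝ) (u v : ℂ) :
    I * (modeRHS a ξ t u v - modeRHS a ξ t v u) = modeRHS a ξ t (I * (u - v)) (I * (u - v)) := by
  simp only [modeRHS, map_mul, map_sub, conj_I]
  ring

theorem cpow_neg_one_sub_two_mul_I_mul {t : ℝ} (ht : 0 < t) (a : ℝ) :
    (t : ℂ) ^ (-1 - 2 * I * (a : ℂ) ^ 2) = (t : ℂ)⁻¹ * exp (-(↑(a ^ 2 * Real.log t) * I)) ^ 2 := by
  have hinv : (t : ℂ)⁻¹ = exp (-(Real.log t : ℂ)) := by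
    rw [Complex.exp_neg, ← ofReal_exp, Real.exp_log ht]
  rw [cpow_def_of_ne_zero (ofReal_ne_zero.2 ht.ne'), ← ofReal_log ht.le, hinv,
    ← Complex.exp_nat_mul, ← Complex.exp_add]
  congr 1
  push_cast
  ring

theorem reducedSolution_of_modeRHS {a ξ : ℝ} {p : ℝ → ℂ}
    (hp : ∀ t ∈ Ici (1:ℝ), HasDerivWithinAt p (modeRHS a ξ t (p t) (p t)) (Ici 1) t) :
    ReducedSolution a (ξ ^ 2)
      (fun t => (exp (↑(a ^ 2 * Real.log t) * I) * p t).re)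
      (fun t => -(exp (↑(a ^ 2 * Real.log t) * I) * p t).im) (Ici 1) := by
  refine reducedSolution_re_neg_im fun t ht => ?_
  have ht0 : 0 < t := zero_lt_one.trans_le ht
  have hw : HasDerivWithinAt (fun t : ℝ => exp (↑(a ^ 2 * Real.log t) * I))
      (exp (↑(a ^ 2 * Real.log t) * I) * (↑(a ^ 2 * t⁻¹) * I)) (Ici 1) t :=
    ((((Real.hasDerivAt_log ht0.ne').const_mul (a ^ 2)).ofReal_comp).mul_const I).cexp
      |>.hasDerivWithinAt
  refine (hw.mul (hp t ht)).congr_deriv ?_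
  have hconj : conj (exp (↑(a ^ 2 * Real.log t) * I)) = exp (-(↑(a ^ 2 * Real.log t) * I)) := by
    rw [← exp_conj, map_mul, conj_ofReal, conj_I, mul_neg]
  have hwu : exp (↑(a ^ 2 * Real.log t) * I) * exp (-(↑(a ^ 2 * Real.log t) * I)) = 1 := by
    rw [← Complex.exp_add, add_neg_cancel, Complex.exp_zero]
  simp only [modeRHS, cpow_neg_one_sub_two_mul_I_mul ht0, map_mul, hconj]
  generalize exp (↑(a ^ 2 * Real.log t) * I) = w at hwu ⊢
  generalize exp (-(↑(a ^ 2 * Real.log t) * I)) = u at hwu ⊢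
  push_cast
  linear_combination (I * a ^ 2 * (t : ℂ)⁻¹ * conj (p t) * u) * hwu

theorem norm_sq_le_of_modeRHS {a ξ : ℝ} {p : ℝ → ℂ}
    (hp : ∀ t ∈ Ici (1:ℝ), HasDerivWithinAt p (modeRHS a ξ t (p t) (p t)) (Ici 1) t)
    {T : ℝ} (hT : 1 ≤ T) :
    ‖p T‖ ^ 2 ≤ 2 * Real.exp (1 + 2 * a ^ 2) * logGrowth a T * ‖p 1‖ ^ 2 := by
  have hnorm : ∀ t, (exp (↑(a ^ 2 * Real.log t) * I) * p t).re ^ 2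
      + (-(exp (↑(a ^ 2 * Real.log t) * I) * p t).im) ^ 2 = ‖p t‖ ^ 2 := fun t => by
    rw [neg_sq, ← normSq_add_mul_I, re_add_im, ← Complex.sq_norm, norm_mul,
      norm_exp_ofReal_mul_I, one_mul]
  simpa only [hnorm] using (reducedSolution_of_modeRHS hp).sq_add_sq_le (sq_nonneg ξ) hT

theorem norm_le_of_modeRHS {a ξ δ : ℝ} (hδ : 0 < δ) {p : ℝ → ℂ}
    (hp : ∀ t ∈ Ici (1:ℝ), HasDerivWithinAt p (modeRHS a ξ t (p t) (p t)) (Ici 1) t)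
    {T : ℝ} (hT : 1 ≤ T) :
    ‖p T‖ ≤ √(2 * Real.exp (1 + 2 * a ^ 2))
      * Real.exp (2 * a ^ 2 + 1 + (2 * a ^ 2 + 1) ^ 2 / (4 * δ)) * T ^ δ * ‖p 1‖ := by
  have hgrowth : logGrowth a T
      ≤ (Real.exp (2 * a ^ 2 + 1 + (2 * a ^ 2 + 1) ^ 2 / (4 * δ)) * T ^ δ) ^ 2 := by
    calc logGrowth a T ≤ Real.exp (2 * (2 * a ^ 2 + 1) * √(1 + Real.log T)) :=
          logGrowth_le_exp hT
      _ = Real.exp ((2 * a ^ 2 + 1) * √(1 + Real.log T)) ^ 2 := by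
          rw [← Real.exp_nat_mul]; ring_nf
      _ ≤ _ := by gcongr; exact exp_mul_sqrt_one_add_log_le (by positivity) hδ hT
  refine (sq_le_sq₀ (norm_nonneg _) (by positivity)).1 ?_
  calc ‖p T‖ ^ 2 ≤ 2 * Real.exp (1 + 2 * a ^ 2) * logGrowth a T * ‖p 1‖ ^ 2 :=
        norm_sq_le_of_modeRHS hp hT
    _ ≤ 2 * Real.exp (1 + 2 * a ^ 2)
        * (Real.exp (2 * a ^ 2 + 1 + (2 * a ^ 2 + 1) ^ 2 / (4 * δ)) * T ^ δ) ^ 2 * ‖p 1‖ ^ 2 := by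
        gcongr
    _ = _ := by
        simp only [mul_pow, sq_sqrt (by positivity : (0:ℝ) ≤ 2 * Real.exp (1 + 2 * a ^ 2))]
        ring

theorem stmt_5_general
    (a δ : ℝ) (hδ : 0 < δ) :
    ∃ C : ℝ, 0 < C ∧ ∀ (ξ : ℝ) (f g : ℝ → ℂ),
      (∀ t ∈ Set.Ici (1:ℝ), HasDerivWithinAt f
        (-(Complex.I * (ξ:ℂ)^2) * f t
          + Complex.I * (a:ℂ)^2 * (t:ℂ) ^ ((-1:ℂ) - 2*Complex.I*(a:ℂ)^2)
              * (starRingEnd ℂ) (g t)) (Set.Ici 1) t) →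
      (∀ t ∈ Set.Ici (1:ℝ), HasDerivWithinAt g
        (-(Complex.I * (ξ:ℂ)^2) * g t
          + Complex.I * (a:ℂ)^2 * (t:ℂ) ^ ((-1:ℂ) - 2*Complex.I*(a:ℂ)^2)
              * (starRingEnd ℂ) (f t)) (Set.Ici 1) t) →
      ∀ t : ℝ, 1 ≤ t → ‖f t‖ ≤ C * t ^ δ * (‖f 1‖ + ‖g 1‖) := by
  set C := √(2 * Real.exp (1 + 2 * a ^ 2))
    * Real.exp (2 * a ^ 2 + 1 + (2 * a ^ 2 + 1) ^ 2 / (4 * δ))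
  refine ⟨C, by positivity, fun ξ f g hf hg t ht => ?_⟩
  have hsum := norm_le_of_modeRHS hδ (p := fun s => f s + g s) (fun s hs =>
    ((hf s hs).add (hg s hs)).congr_deriv (modeRHS_add_swap a ξ s (f s) (g s))) ht
  have hdiff := norm_le_of_modeRHS hδ (p := fun s => I * (f s - g s)) (fun s hs =>
    (((hf s hs).sub (hg s hs)).const_mul I).congr_deriv
      (I_mul_modeRHS_sub_swap a ξ s (f s) (g s))) ht
  have hM : 0 ≤ C * t ^ δ := by positivity
  have hf_eq : 2 * f t = (f t + g t) - I * (I * (f t - g t)) := by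
    linear_combination (f t - g t) * I_sq
  have hnorm_I : ∀ z : ℂ, ‖I * z‖ = ‖z‖ := fun z => by rw [norm_mul, norm_I, one_mul]
  simp only [hnorm_I] at hdiff
  calc ‖f t‖ = ‖(f t + g t) - I * (I * (f t - g t))‖ / 2 := by
        rw [← hf_eq, norm_mul]; norm_num
    _ ≤ (‖f t + g t‖ + ‖f t - g t‖) / 2 := by
        gcongr
        exact (norm_sub_le _ _).trans_eq (by rw [hnorm_I, hnorm_I])
    _ ≤ (C * t ^ δ * ‖f 1 + g 1‖ + C * t ^ δ * ‖f 1 - g 1‖) / 2 := by gcongr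
    _ ≤ C * t ^ δ * (‖f 1‖ + ‖g 1‖) := by
        nlinarith [mul_le_mul_of_nonneg_left (norm_add_le (f 1) (g 1)) hM,
          mul_le_mul_of_nonneg_left (norm_sub_le (f 1) (g 1)) hM]

/-- **A-priori growth bound on the Fourier modes of the linear equation.** For `a, δ > 0`
there is `C(δ) > 0` such that for every frequency `ξ` and every `C¹` pair `(f,g)` on `[1,∞)`
solving `f' = −iξ²f + ia² t^{−1−2ia²} conj(g)`, `g' = −iξ²g + ia² t^{−1−2ia²} conj(f)`,
one has `|f(t)| ≤ C(δ) t^δ (|f(1)| + |g(1)|)` for all `t ≥ 1`. -/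
theorem stmt_5
    (a δ : ℝ) (ha : 0 < a) (hδ : 0 < δ) :
    ∃ C : ℝ, 0 < C ∧ ∀ (ξ : ℝ) (f g : ℝ → ℂ),
      (∀ t ∈ Set.Ici (1:ℝ), HasDerivWithinAt f
        (-(Complex.I * (ξ:ℂ)^2) * f t
          + Complex.I * (a:ℂ)^2 * (t:ℂ) ^ ((-1:ℂ) - 2*Complex.I*(a:ℂ)^2)
              * (starRingEnd ℂ) (g t)) (Set.Ici 1) t) →
      (∀ t ∈ Set.Ici (1:ℝ), HasDerivWithinAt g
        (-(Complex.I * (ξ:ℂ)^2) * g t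
          + Complex.I * (a:ℂ)^2 * (t:ℂ) ^ ((-1:ℂ) - 2*Complex.I*(a:ℂ)^2)
              * (starRingEnd ℂ) (f t)) (Set.Ici 1) t) →
      ∀ t : ℝ, 1 ≤ t → ‖f t‖ ≤ C * t ^ δ * (‖f 1‖ + ‖g 1‖) :=
  stmt_5_general a δ hδ
end

section
/- Let a > 0 and let F : [1,∞) × ℝ → ℂ be measurable, such that for almost every ξ ∈ ℝ the functions t ↦ F(t,ξ) and t ↦ F(t,−ξ) are C¹ and satisfy F_t(t,ξ) = −i ξ² F(t,ξ) + i a² t^{−1−2ia²} conj(F(t,−ξ)). Assume F(1,·) ∈ L²(ℝ). Then there is a constant C depending only on a such that for all 1 ≤ t₁ ≤ t₂, the function A_{t₁,t₂}(ξ) = ∫_{t₁}^{t₂} e^{i s ξ²} conj(F(s,−ξ)) s^{−1−2ia²} ds satisfies ‖A_{t₁,t₂}‖_{L²({|ξ| ≥ 1})} ≤ C t₁^{−1} ‖F(1,·)‖_{L²(ℝ)}. -/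
/-!
For fixed `ξ` the pair `g = F(·, ξ)`, `h = F(·, -ξ)` solves a linear system in which `g` is
coupled to `conj h` and `h` to `conj g`. Multiplying by the phase `t^{ia²}` turns `g + h` and
`g - h` into solutions of decoupled scalar equations
`u' = i(a²/t - ξ²) u ± i(a²/t) conj u`. For `t ≤ max 1 (4a²)` Gronwall bounds `|u|`; for larger
`t` and `|ξ| ≥ 1` the quadratic energy of the frozen-coefficient equation is comparable to
`ξ² |u|²` and grows by at most the factor `exp (4a² / max 1 (4a²)) ≤ e`. Hence `|g|² + |h|²`
stays bounded by a constant (depending on `a` only) times its value at `t = 1`.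

The integrand `Q s = e^{isξ²} conj(h s) s^{-1-2ia²}` then oscillates at frequency `2ξ²`: writing
it as `(Q' + R) / (2iξ²)` with `R = O(s⁻²)` and integrating by parts gives the pointwise bound
`|A(ξ)| ≲ t₁⁻¹ (|F(1, ξ)| + |F(1, -ξ)|)` for `|ξ| ≥ 1`, and the `L²` bound follows because
`ξ ↦ -ξ` preserves Lebesgue measure.
-/

open MeasureTheory Complex Set ComplexConjugate

theorem le_mul_exp_sub_of_hasDerivAt_le {f f' K k : ℝ → ℝ} {s : Set ℝ} (hs : Convex ℝ s)
    (hf : ContinuousOn f s) (hK : ContinuousOn K s)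
    (hf' : ∀ t ∈ interior s, HasDerivAt f (f' t) t)
    (hK' : ∀ t ∈ interior s, HasDerivAt K (k t) t)
    (hle : ∀ t ∈ interior s, f' t ≤ k t * f t) {t₀ t : ℝ} (ht₀ : t₀ ∈ s) (ht : t ∈ s)
    (h : t₀ ≤ t) : f t ≤ f t₀ * Real.exp (K t - K t₀) := by
  have hanti : AntitoneOn (fun t => f t * Real.exp (-K t)) s := by
    refine antitoneOn_of_hasDerivWithinAt_nonpos
      (f' := fun t => Real.exp (-K t) * (f' t - k t * f t)) hs
      (hf.mul (Real.continuous_exp.comp_continuousOn hK.neg)) (fun t ht => ?_) (fun t ht => ?_)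
    · exact ((hf' t ht).mul (hK' t ht).neg.exp).hasDerivWithinAt.congr_deriv
        (by simp only [Pi.neg_apply]; ring)
    · exact mul_nonpos_of_nonneg_of_nonpos (Real.exp_pos _).le (sub_nonpos.2 (hle t ht))
  calc f t = f t * Real.exp (-K t) * Real.exp (K t) := by
        rw [mul_assoc, ← Real.exp_add, neg_add_cancel, Real.exp_zero, mul_one]
    _ ≤ f t₀ * Real.exp (-K t₀) * Real.exp (K t) :=
        mul_le_mul_of_nonneg_right (hanti ht₀ ht h) (Real.exp_pos _).le
    _ = f t₀ * Real.exp (K t - K t₀) := by rw [mul_assoc, ← Real.exp_add, neg_add_eq_sub]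

theorem hasDerivAt_const_div (c : ℝ) {x : ℝ} (hx : x ≠ 0) :
    HasDerivAt (fun s => c / s) (-(c / x ^ 2)) x := by
  simpa [div_eq_mul_inv] using (hasDerivAt_inv hx).const_mul c

theorem sq_norm_eq_re_sq_add_im_sq (z : ℂ) : ‖z‖ ^ 2 = z.re ^ 2 + z.im ^ 2 := by
  rw [Complex.sq_norm, normSq_apply]; ring

theorem hasDerivAt_ofReal_cpow (c : ℂ) {t : ℝ} (ht : 0 < t) :
    HasDerivAt (fun s : ℝ => (s : ℂ) ^ c) (c / t * (t : ℂ) ^ c) t := by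
  have htC : (t : ℂ) ≠ 0 := ofReal_ne_zero.2 ht.ne'
  refine ((hasDerivAt_id (t : ℂ)).cpow_const
    (ofReal_mem_slitPlane.2 ht)).comp_ofReal.congr_deriv ?_
  rw [id, cpow_sub _ _ htC, cpow_one, mul_one]
  ring

theorem norm_ofReal_cpow_I_mul (x : ℝ) {t : ℝ} (ht : 0 < t) : ‖(t : ℂ) ^ (I * x)‖ = 1 := by
  simp [norm_cpow_eq_rpow_re_of_pos ht]

theorem conj_ofReal_cpow_I_mul (x : ℝ) {t : ℝ} (ht : 0 < t) :
    conj ((t : ℂ) ^ (I * x)) = (t : ℂ) ^ (-(I * x)) := by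
  rw [show -(I * x) = conj (I * x) by simp,
    cpow_conj _ _ (by simp [arg_ofReal_of_nonneg ht.le, Real.pi_ne_zero.symm]), conj_ofReal]

theorem ofReal_cpow_I_mul_mul_cpow (x : ℝ) {t : ℝ} (ht : 0 < t) :
    (t : ℂ) ^ (I * x) * (t : ℂ) ^ ((-1 : ℂ) - 2 * I * x)
      = (t : ℂ)⁻¹ * conj ((t : ℂ) ^ (I * x)) := by
  have htC : (t : ℂ) ≠ 0 := ofReal_ne_zero.2 ht.ne'
  rw [conj_ofReal_cpow_I_mul x ht, ← cpow_neg_one, ← cpow_add _ _ htC, ← cpow_add _ _ htC]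
  ring_nf

theorem norm_ofReal_cpow_neg_one_sub (a : ℝ) {s : ℝ} (hs : 0 < s) :
    ‖(s : ℂ) ^ ((-1 : ℂ) - 2 * I * (a : ℂ) ^ 2)‖ = s⁻¹ := by
  rw [norm_cpow_eq_rpow_re_of_pos hs]
  simp [← ofReal_pow, Real.rpow_neg_one]

theorem norm_exp_I_mul_mul_sq (s ξ : ℝ) : ‖exp (I * s * ξ ^ 2)‖ = 1 := by
  simp [norm_exp, ← ofReal_pow]

theorem integral_eq_inv_mul_of_hasDerivAt_eq_mul_sub {Q R : ℝ → ℂ} {c : ℂ} {a b : ℝ}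
    (hc : c ≠ 0) (hab : a ≤ b) (hQc : ContinuousOn Q (Icc a b))
    (hQ : ∀ s ∈ Ioo a b, HasDerivAt Q (c * Q s - R s) s) (hR : IntervalIntegrable R volume a b) :
    ∫ s in a..b, Q s = c⁻¹ * (Q b - Q a + ∫ s in a..b, R s) := by
  have hQi : IntervalIntegrable Q volume a b := hQc.intervalIntegrable_of_Icc hab
  have hftc := intervalIntegral.integral_eq_sub_of_hasDeriv_right_of_le hab hQc
    (fun s hs => (hQ s hs).hasDerivWithinAt) ((hQi.const_mul c).sub hR)
  rw [intervalIntegral.integral_sub (hQi.const_mul c) hR, intervalIntegral.integral_const_mul]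
    at hftc
  field_simp
  linear_combination hftc

theorem intervalIntegrable_inv_sq {a b : ℝ} (ha : 0 < a) (hab : a ≤ b) :
    IntervalIntegrable (fun s : ℝ => (s ^ 2)⁻¹) volume a b :=
  ContinuousOn.intervalIntegrable_of_Icc hab fun _ hs =>
    ((continuousAt_id.pow 2).inv₀ (pow_ne_zero 2 (ha.trans_le hs.1).ne')).continuousWithinAt

theorem integral_inv_sq_le {a b : ℝ} (ha : 0 < a) (hab : a ≤ b) :
    ∫ s in a..b, (s ^ 2)⁻¹ ≤ a⁻¹ := by
  rw [intervalIntegral.integral_eq_sub_of_hasDerivAt (f := fun s => -s⁻¹)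
    (fun s hs => (hasDerivAt_inv (ha.trans_le (uIcc_of_le hab ▸ hs).1).ne').neg.congr_deriv
      (neg_neg _)) (intervalIntegrable_inv_sq ha hab)]
  have := inv_pos.2 (ha.trans_le hab)
  linarith

theorem norm_integral_le_of_hasDerivAt_eq_mul_sub {Q R : ℝ → ℂ} {c : ℂ} {a b M N : ℝ}
    (hc : c ≠ 0) (ha : 0 < a) (hab : a ≤ b) (hQc : ContinuousOn Q (Icc a b))
    (hQ : ∀ s ∈ Ioo a b, HasDerivAt Q (c * Q s - R s) s) (hR : IntervalIntegrable R volume a b)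
    (hQM : ∀ s ∈ Icc a b, ‖Q s‖ ≤ M) (hRN : ∀ s ∈ Icc a b, ‖R s‖ ≤ N * (s ^ 2)⁻¹) :
    ‖∫ s in a..b, Q s‖ ≤ (2 * M + N * a⁻¹) / ‖c‖ := by
  have hN : 0 ≤ N := nonneg_of_mul_nonneg_left
    ((norm_nonneg _).trans (hRN a (left_mem_Icc.2 hab))) (by positivity)
  have hRint : ‖∫ s in a..b, R s‖ ≤ N * a⁻¹ := by
    refine (intervalIntegral.norm_integral_le_of_norm_le hab
      (ae_of_all _ fun s hs => hRN s (Ioc_subset_Icc_self hs))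
      ((intervalIntegrable_inv_sq ha hab).const_mul N)).trans ?_
    rw [intervalIntegral.integral_const_mul]
    exact mul_le_mul_of_nonneg_left (integral_inv_sq_le ha hab) hN
  rw [integral_eq_inv_mul_of_hasDerivAt_eq_mul_sub hc hab hQc hQ hR, norm_mul, norm_inv,
    inv_mul_eq_div]
  gcongr
  calc ‖Q b - Q a + ∫ s in a..b, R s‖ ≤ ‖Q b - Q a‖ + ‖∫ s in a..b, R s‖ := norm_add_le _ _
    _ ≤ ‖Q b‖ + ‖Q a‖ + N * a⁻¹ := add_le_add (norm_sub_le _ _) hRint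
    _ ≤ 2 * M + N * a⁻¹ := by
        linarith [hQM b (right_mem_Icc.2 hab), hQM a (left_mem_Icc.2 hab)]

def ScalarModeEq (a ξ ε : ℝ) (u : ℝ → ℂ) : Prop :=
  ∀ t ∈ Ici (1 : ℝ), HasDerivWithinAt u
    (I * (a ^ 2 / t - ξ ^ 2) * u t + ε * I * (a ^ 2 / t) * conj (u t)) (Ici 1) t

/-- The energy `α x² + β y²` of the system `x' = β y`, `y' = -α x` satisfied by the real and
imaginary parts of a solution of `ScalarModeEq a ξ ε`, with the coefficients frozen at time `s`. -/
noncomputable def modeEnergy (a ξ ε s : ℝ) (z : ℂ) : ℝ :=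
  (ξ ^ 2 - (1 + ε) * (a ^ 2 / s)) * z.re ^ 2 + (ξ ^ 2 - (1 - ε) * (a ^ 2 / s)) * z.im ^ 2

section modeEnergy

variable {a ξ ε s : ℝ}

theorem modeEnergy_le (hε : |ε| ≤ 1) (hs : 0 < s) (z : ℂ) :
    modeEnergy a ξ ε s z ≤ ξ ^ 2 * ‖z‖ ^ 2 := by
  obtain ⟨hε₁, hε₂⟩ := abs_le.1 hε
  have hp : 0 ≤ (1 + ε) * (a ^ 2 / s) * z.re ^ 2 :=
    mul_nonneg (mul_nonneg (by linarith) (by positivity)) (sq_nonneg _)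
  have hm : 0 ≤ (1 - ε) * (a ^ 2 / s) * z.im ^ 2 :=
    mul_nonneg (mul_nonneg (by linarith) (by positivity)) (sq_nonneg _)
  rw [modeEnergy, sq_norm_eq_re_sq_add_im_sq]
  linarith

theorem half_mul_sq_norm_le_modeEnergy (hε : |ε| ≤ 1) (hξ : 1 ≤ ξ ^ 2) (hs : 0 < s)
    (has : 4 * a ^ 2 ≤ s) (z : ℂ) : ξ ^ 2 / 2 * ‖z‖ ^ 2 ≤ modeEnergy a ξ ε s z := by
  obtain ⟨hε₁, hε₂⟩ := abs_le.1 hε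
  have hb₀ : 0 ≤ a ^ 2 / s := by positivity
  have hb : a ^ 2 / s ≤ 1 / 4 := by rw [div_le_iff₀ hs]; linarith
  have hp : (1 + ε) * (a ^ 2 / s) ≤ ξ ^ 2 / 2 := by nlinarith
  have hm : (1 - ε) * (a ^ 2 / s) ≤ ξ ^ 2 / 2 := by nlinarith
  rw [modeEnergy, sq_norm_eq_re_sq_add_im_sq]
  nlinarith [mul_le_mul_of_nonneg_right hp (sq_nonneg z.re),
    mul_le_mul_of_nonneg_right hm (sq_nonneg z.im)]

end modeEnergy

noncomputable def modeGrowthConst (a : ℝ) : ℝ :=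
  2 * Real.exp 1 * Real.exp (2 * a ^ 2 * max 1 (4 * a ^ 2))

theorem modeGrowthConst_pos (a : ℝ) : 0 < modeGrowthConst a := by
  unfold modeGrowthConst; positivity

namespace ScalarModeEq

variable {a ξ ε : ℝ} {u : ℝ → ℂ}

theorem continuousOn (hu : ScalarModeEq a ξ ε u) : ContinuousOn u (Ici 1) :=
  fun t ht => (hu t ht).continuousWithinAt

theorem hasDerivAt_re (hu : ScalarModeEq a ξ ε u) {t : ℝ} (ht : 1 < t) :
    HasDerivAt (fun s => (u s).re) ((ξ ^ 2 - (1 - ε) * (a ^ 2 / t)) * (u t).im) t := by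
  refine (reCLM.hasFDerivAt.comp_hasDerivAt t
    ((hu t ht.le).hasDerivAt (Ici_mem_nhds ht))).congr_deriv ?_
  simp [← ofReal_pow, ← ofReal_div, mul_re, mul_im]
  ring

theorem hasDerivAt_im (hu : ScalarModeEq a ξ ε u) {t : ℝ} (ht : 1 < t) :
    HasDerivAt (fun s => (u s).im) (-((ξ ^ 2 - (1 + ε) * (a ^ 2 / t)) * (u t).re)) t := by
  refine (imCLM.hasFDerivAt.comp_hasDerivAt t
    ((hu t ht.le).hasDerivAt (Ici_mem_nhds ht))).congr_deriv ?_
  simp [← ofReal_pow, ← ofReal_div, mul_re, mul_im]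
  ring

theorem continuousOn_modeEnergy (hu : ScalarModeEq a ξ ε u) :
    ContinuousOn (fun s => modeEnergy a ξ ε s (u s)) (Ici 1) := by
  have hb : ContinuousOn (fun s : ℝ => a ^ 2 / s) (Ici 1) :=
    continuousOn_const.div continuousOn_id fun s hs => (zero_lt_one.trans_le hs).ne'
  exact ((continuousOn_const.sub (continuousOn_const.mul hb)).mul
      ((continuous_re.comp_continuousOn hu.continuousOn).pow 2)).add
    ((continuousOn_const.sub (continuousOn_const.mul hb)).mul
      ((continuous_im.comp_continuousOn hu.continuousOn).pow 2))

theorem hasDerivAt_modeEnergy (hu : ScalarModeEq a ξ ε u) {t : ℝ} (ht : 1 < t) :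
    HasDerivAt (fun s => modeEnergy a ξ ε s (u s))
      ((1 + ε) * (a ^ 2 / t ^ 2) * (u t).re ^ 2 + (1 - ε) * (a ^ 2 / t ^ 2) * (u t).im ^ 2) t := by
  have hb := hasDerivAt_const_div (a ^ 2) (zero_lt_one.trans ht).ne'
  refine ((((hb.const_mul (1 + ε)).const_sub (ξ ^ 2)).mul ((hu.hasDerivAt_re ht).pow 2)).add
    (((hb.const_mul (1 - ε)).const_sub (ξ ^ 2)).mul
      ((hu.hasDerivAt_im ht).pow 2))).congr_deriv ?_
  simp only [Pi.pow_apply]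
  ring

theorem sq_norm_le_mul_exp (hu : ScalarModeEq a ξ ε u) (hε : |ε| ≤ 1) {t : ℝ} (ht : 1 ≤ t) :
    ‖u t‖ ^ 2 ≤ ‖u 1‖ ^ 2 * Real.exp (2 * a ^ 2 * (t - 1)) := by
  obtain ⟨hε₁, hε₂⟩ := abs_le.1 hε
  simp only [sq_norm_eq_re_sq_add_im_sq]
  have key := le_mul_exp_sub_of_hasDerivAt_le (convex_Ici 1)
    (f := fun s => (u s).re ^ 2 + (u s).im ^ 2) (K := fun s => 2 * a ^ 2 * s)
    (k := fun _ => 2 * a ^ 2)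
    ((continuous_re.comp_continuousOn hu.continuousOn).pow 2 |>.add
      ((continuous_im.comp_continuousOn hu.continuousOn).pow 2))
    (continuous_const.mul continuous_id).continuousOn
    (fun s hs => by
      rw [interior_Ici] at hs
      exact ((hu.hasDerivAt_re hs).pow 2).add ((hu.hasDerivAt_im hs).pow 2))
    (fun s _ => hasDerivAt_const_mul _)
    (fun s hs => ?_) self_mem_Ici ht ht
  · convert key using 3; ring
  · rw [interior_Ici, mem_Ioi] at hs
    have hb₀ : 0 ≤ a ^ 2 / s := by positivity
    have hb : a ^ 2 / s ≤ a ^ 2 := div_le_self (sq_nonneg a) hs.le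
    nlinarith [sq_nonneg ((u s).re + (u s).im), sq_nonneg ((u s).re - (u s).im),
      mul_nonneg hb₀ (sq_nonneg ((u s).re + (u s).im)),
      mul_nonneg hb₀ (sq_nonneg ((u s).re - (u s).im))]

theorem sq_norm_le_two_mul_exp_one_mul (hu : ScalarModeEq a ξ ε u) (hε : |ε| ≤ 1)
    (hξ : 1 ≤ ξ ^ 2) {T t : ℝ} (hT : 1 ≤ T) (haT : 4 * a ^ 2 ≤ T) (hTt : T ≤ t) :
    ‖u t‖ ^ 2 ≤ 2 * Real.exp 1 * ‖u T‖ ^ 2 := by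
  obtain ⟨hε₁, hε₂⟩ := abs_le.1 hε
  have hpos : ∀ s ∈ Ici T, 0 < s := fun s hs => zero_lt_one.trans_le (hT.trans hs)
  have hE : ∀ s ∈ Ici T, ξ ^ 2 / 2 * ‖u s‖ ^ 2 ≤ modeEnergy a ξ ε s (u s) := fun s hs =>
    half_mul_sq_norm_le_modeEnergy hε hξ (hpos s hs) (haT.trans hs) _
  have hgrowth := le_mul_exp_sub_of_hasDerivAt_le (convex_Ici T)
    (hu.continuousOn_modeEnergy.mono (Ici_subset_Ici.2 hT))
    (K := fun s => -(4 * a ^ 2 / s)) (k := fun s => 4 * a ^ 2 / s ^ 2)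
    (continuousOn_const.div continuousOn_id fun s hs => (hpos s hs).ne').neg
    (fun s hs => hu.hasDerivAt_modeEnergy (hT.trans_lt (interior_Ici.subset hs)))
    (fun s hs => (hasDerivAt_const_div (4 * a ^ 2)
      (hpos s (interior_subset hs)).ne').fun_neg.congr_deriv (neg_neg _))
    (fun s hs => ?_) self_mem_Ici hTt hTt
  · have hexp : Real.exp (-(4 * a ^ 2 / t) - -(4 * a ^ 2 / T)) ≤ Real.exp 1 := by
      gcongr
      have : 0 ≤ 4 * a ^ 2 / t := div_nonneg (by positivity) (hpos t hTt).le
      have : 4 * a ^ 2 / T ≤ 1 := (div_le_one₀ (hpos T self_mem_Ici)).2 haT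
      linarith
    have hET : 0 ≤ modeEnergy a ξ ε T (u T) :=
      (by positivity : (0 : ℝ) ≤ ξ ^ 2 / 2 * ‖u T‖ ^ 2).trans (hE T self_mem_Ici)
    have := ((hE t hTt).trans hgrowth).trans (mul_le_mul_of_nonneg_left hexp hET)
    have := this.trans (mul_le_mul_of_nonneg_right
      (modeEnergy_le hε (hpos T self_mem_Ici) (u T)) (Real.exp_pos 1).le)
    nlinarith
  · have hs := interior_subset hs
    have hc : 0 ≤ a ^ 2 / s ^ 2 := by positivity
    have hdrift : (1 + ε) * (a ^ 2 / s ^ 2) * (u s).re ^ 2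
        + (1 - ε) * (a ^ 2 / s ^ 2) * (u s).im ^ 2 ≤ 2 * (a ^ 2 / s ^ 2) * ‖u s‖ ^ 2 := by
      rw [sq_norm_eq_re_sq_add_im_sq]
      nlinarith [mul_nonneg (mul_nonneg (by linarith : (0 : ℝ) ≤ 1 - ε) hc) (sq_nonneg (u s).re),
        mul_nonneg (mul_nonneg (by linarith : (0 : ℝ) ≤ 1 + ε) hc) (sq_nonneg (u s).im)]
    have hnorm : ‖u s‖ ^ 2 ≤ 2 * modeEnergy a ξ ε s (u s) := by
      nlinarith [hE s hs, sq_nonneg ‖u s‖]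
    rw [show 4 * a ^ 2 / s ^ 2 = 2 * (2 * (a ^ 2 / s ^ 2)) by ring]
    nlinarith [mul_le_mul_of_nonneg_left hnorm hc]

theorem sq_norm_le (hu : ScalarModeEq a ξ ε u) (hε : |ε| ≤ 1) (hξ : 1 ≤ ξ ^ 2) {t : ℝ}
    (ht : 1 ≤ t) : ‖u t‖ ^ 2 ≤ modeGrowthConst a * ‖u 1‖ ^ 2 := by
  set T := max 1 (4 * a ^ 2)
  have hearly : ∀ s, 1 ≤ s → s ≤ T → ‖u s‖ ^ 2 ≤ Real.exp (2 * a ^ 2 * T) * ‖u 1‖ ^ 2 := by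
    intro s hs hsT
    rw [mul_comm]
    refine (hu.sq_norm_le_mul_exp hε hs).trans ?_
    gcongr
    linarith
  have h2e : 1 ≤ 2 * Real.exp 1 := by linarith [Real.add_one_le_exp 1]
  rcases le_total t T with htT | hTt
  · calc ‖u t‖ ^ 2 ≤ Real.exp (2 * a ^ 2 * T) * ‖u 1‖ ^ 2 := hearly t ht htT
      _ ≤ modeGrowthConst a * ‖u 1‖ ^ 2 := by
        unfold modeGrowthConst
        gcongr
        exact le_mul_of_one_le_left (Real.exp_pos _).le h2e
  · calc ‖u t‖ ^ 2 ≤ 2 * Real.exp 1 * ‖u T‖ ^ 2 :=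
          hu.sq_norm_le_two_mul_exp_one_mul hε hξ (le_max_left _ _) (le_max_right _ _) hTt
      _ ≤ 2 * Real.exp 1 * (Real.exp (2 * a ^ 2 * T) * ‖u 1‖ ^ 2) := by
        gcongr
        exact hearly T (le_max_left _ _) le_rfl
      _ = modeGrowthConst a * ‖u 1‖ ^ 2 := by unfold modeGrowthConst; ring

end ScalarModeEq

/-- The coupled modes `(F(·, ξ), F(·, -ξ))` are the pairs with `ModeEq a ξ g h` and
`ModeEq a ξ h g`. -/
def ModeEq (a ξ : ℝ) (g h : ℝ → ℂ) : Prop :=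
  ∀ t ∈ Ici (1 : ℝ), HasDerivWithinAt g
    (-(I * (ξ : ℂ) ^ 2) * g t
      + I * (a : ℂ) ^ 2 * (t : ℂ) ^ ((-1 : ℂ) - 2 * I * (a : ℂ) ^ 2) * conj (h t)) (Ici 1) t

noncomputable def duhamelIntegrand (a ξ : ℝ) (h : ℝ → ℂ) (s : ℝ) : ℂ :=
  exp (I * s * ξ ^ 2) * conj (h s) * (s : ℂ) ^ ((-1 : ℂ) - 2 * I * (a : ℂ) ^ 2)

/-- The non-oscillating part of the derivative of `duhamelIntegrand a ξ h` when
`ModeEq a ξ h g`. -/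
noncomputable def duhamelRemainder (a ξ : ℝ) (g h : ℝ → ℂ) (s : ℝ) : ℂ :=
  I * a ^ 2 * exp (I * s * ξ ^ 2) * ((s : ℂ) ^ 2)⁻¹ * g s
    - ((-1 : ℂ) - 2 * I * a ^ 2) / s * duhamelIntegrand a ξ h s

section duhamel

variable {a ξ : ℝ} {g h : ℝ → ℂ}

theorem norm_duhamelIntegrand {s : ℝ} (hs : 0 < s) :
    ‖duhamelIntegrand a ξ h s‖ = ‖h s‖ * s⁻¹ := by
  rw [duhamelIntegrand, norm_mul, norm_mul, norm_exp_I_mul_mul_sq,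
    norm_ofReal_cpow_neg_one_sub a hs, RCLike.norm_conj, one_mul]

theorem norm_duhamelRemainder_le {s : ℝ} (hs : 0 < s) :
    ‖duhamelRemainder a ξ g h s‖ ≤ (a ^ 2 * ‖g s‖ + (1 + 2 * a ^ 2) * ‖h s‖) * (s ^ 2)⁻¹ := by
  have hc : ‖(-1 : ℂ) - 2 * I * a ^ 2‖ ≤ 1 + 2 * a ^ 2 :=
    (norm_sub_le _ _).trans (le_of_eq (by simp [← ofReal_pow]))
  calc _ ≤ a ^ 2 * ‖g s‖ * (s ^ 2)⁻¹ + ‖(-1 : ℂ) - 2 * I * a ^ 2‖ * ‖h s‖ * (s ^ 2)⁻¹ := by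
        refine (norm_sub_le _ _).trans (le_of_eq ?_)
        simp only [norm_mul, norm_div, norm_duhamelIntegrand hs, norm_exp_I_mul_mul_sq]
        simp [← ofReal_pow, abs_of_pos hs]
        field_simp
    _ ≤ _ := by
        rw [add_mul]
        gcongr

theorem continuousOn_duhamelIntegrand (hh : ContinuousOn h (Ici 1)) :
    ContinuousOn (duhamelIntegrand a ξ h) (Ici 1) :=
  ((continuous_exp.comp (by fun_prop)).continuousOn.mul
    (continuous_conj.comp_continuousOn hh)).mul fun s hs =>
      (hasDerivAt_ofReal_cpow _ (zero_lt_one.trans_le hs)).continuousAt.continuousWithinAt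

theorem continuousOn_duhamelRemainder (hg : ContinuousOn g (Ici 1))
    (hh : ContinuousOn h (Ici 1)) : ContinuousOn (duhamelRemainder a ξ g h) (Ici 1) := by
  have hne : ∀ s ∈ Ici (1 : ℝ), (s : ℂ) ≠ 0 := fun s hs =>
    ofReal_ne_zero.2 (zero_lt_one.trans_le hs).ne'
  exact (((continuousOn_const.mul (continuous_exp.comp (by fun_prop)).continuousOn).mul
    ((continuous_ofReal.continuousOn.pow 2).inv₀ fun s hs => pow_ne_zero 2 (hne s hs))).mul
      hg).sub
    ((continuousOn_const.div continuous_ofReal.continuousOn hne).mul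
      (continuousOn_duhamelIntegrand hh))

end duhamel

namespace ModeEq

variable {a ξ : ℝ} {g h : ℝ → ℂ}

theorem continuousOn (hg : ModeEq a ξ g h) : ContinuousOn g (Ici 1) :=
  fun t ht => (hg t ht).continuousWithinAt

theorem scalarModeEq (hg : ModeEq a ξ g h) (hh : ModeEq a ξ h g) {ε : ℝ} (hε : ε ^ 2 = 1) :
    ScalarModeEq a ξ ε (fun t => (t : ℂ) ^ (I * a ^ 2) * (g t + ε * h t)) := by
  intro t ht
  have ht₀ : 0 < t := zero_lt_one.trans_le ht
  have key := ofReal_cpow_I_mul_mul_cpow (a ^ 2) ht₀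
  have hεC : (ε : ℂ) ^ 2 = 1 := by exact_mod_cast hε
  push_cast at key
  refine ((hasDerivAt_ofReal_cpow (I * a ^ 2) ht₀).hasDerivWithinAt.mul
    ((hg t ht).add ((hh t ht).const_mul (ε : ℂ)))).congr_deriv ?_
  simp only [Pi.add_apply, map_mul, map_add, conj_ofReal]
  linear_combination (I * a ^ 2 * (conj (h t) + ε * conj (g t))) * key
    - (I * a ^ 2 * (t : ℂ)⁻¹ * conj ((t : ℂ) ^ (I * a ^ 2)) * conj (h t)) * hεC

theorem sq_norm_add_sq_norm_le (hg : ModeEq a ξ g h) (hh : ModeEq a ξ h g) (hξ : 1 ≤ ξ ^ 2)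
    {t : ℝ} (ht : 1 ≤ t) :
    ‖g t‖ ^ 2 + ‖h t‖ ^ 2 ≤ modeGrowthConst a * (‖g 1‖ ^ 2 + ‖h 1‖ ^ 2) := by
  have hnorm : ∀ (ε s : ℝ), 1 ≤ s →
      ‖(s : ℂ) ^ (I * (a : ℂ) ^ 2) * (g s + ε * h s)‖ = ‖g s + ε * h s‖ := by
    intro ε s hs
    rw [norm_mul, ← ofReal_pow, norm_ofReal_cpow_I_mul _ (zero_lt_one.trans_le hs), one_mul]
  have hadd := (hg.scalarModeEq hh (ε := 1) (by norm_num)).sq_norm_le (by norm_num) hξ ht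
  have hsub := (hg.scalarModeEq hh (ε := -1) (by norm_num)).sq_norm_le (by norm_num) hξ ht
  beta_reduce at hadd hsub
  rw [hnorm _ _ ht, hnorm _ _ le_rfl] at hadd hsub
  simp only [ofReal_one, ofReal_neg, one_mul, neg_one_mul, ← sub_eq_add_neg] at hadd hsub
  have hpar := parallelogram_law_with_norm ℂ (g t) (h t)
  calc ‖g t‖ ^ 2 + ‖h t‖ ^ 2 = (‖g t + h t‖ ^ 2 + ‖g t - h t‖ ^ 2) / 2 := by linarith
    _ ≤ modeGrowthConst a * (‖g 1 + h 1‖ ^ 2 + ‖g 1 - h 1‖ ^ 2) / 2 := by linarith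
    _ = modeGrowthConst a * (‖g 1‖ ^ 2 + ‖h 1‖ ^ 2) := by
      rw [parallelogram_law_with_norm ℂ]; ring

theorem hasDerivAt_duhamelIntegrand (hh : ModeEq a ξ h g) {s : ℝ} (hs : 1 < s) :
    HasDerivAt (duhamelIntegrand a ξ h)
      (2 * I * ξ ^ 2 * duhamelIntegrand a ξ h s - duhamelRemainder a ξ g h s) s := by
  have hs₀ : 0 < s := zero_lt_one.trans hs
  have hww : conj ((s : ℂ) ^ ((-1 : ℂ) - 2 * I * (a : ℂ) ^ 2))
      * (s : ℂ) ^ ((-1 : ℂ) - 2 * I * (a : ℂ) ^ 2) = ((s : ℂ) ^ 2)⁻¹ := by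
    rw [conj_mul', norm_ofReal_cpow_neg_one_sub a hs₀]
    push_cast
    ring
  have he : HasDerivAt (fun s : ℝ => exp (I * s * ξ ^ 2))
      (I * ξ ^ 2 * exp (I * s * ξ ^ 2)) s := by
    refine (((hasDerivAt_id s).ofReal_comp.const_mul I).mul_const _).cexp.congr_deriv ?_
    simp only [id, ofReal_one]
    ring
  refine ((he.mul ((hh s hs.le).hasDerivAt (Ici_mem_nhds hs)).star).mul
    (hasDerivAt_ofReal_cpow _ hs₀)).congr_deriv ?_
  simp only [duhamelRemainder, duhamelIntegrand, star_def, map_add, map_mul, map_neg, conj_I,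
    conj_ofReal, map_pow, conj_conj, Pi.mul_apply]
  linear_combination (-(I * a ^ 2 * exp (I * s * ξ ^ 2) * g s)) * hww

theorem norm_integral_duhamelIntegrand_le_of_bound (hh : ModeEq a ξ h g)
    (hgc : ContinuousOn g (Ici 1)) (hξ : 1 ≤ ξ ^ 2) {S : ℝ} (hgS : ∀ s, 1 ≤ s → ‖g s‖ ≤ S)
    (hhS : ∀ s, 1 ≤ s → ‖h s‖ ≤ S) {t₁ t₂ : ℝ} (ht₁ : 1 ≤ t₁) (ht : t₁ ≤ t₂) :
    ‖∫ s in t₁..t₂, duhamelIntegrand a ξ h s‖ ≤ 2 * (1 + a ^ 2) * S / t₁ := by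
  have hsub : Icc t₁ t₂ ⊆ Ici 1 := fun s hs => ht₁.trans hs.1
  have hpos : ∀ s ∈ Icc t₁ t₂, 0 < s := fun s hs => zero_lt_one.trans_le (hsub hs)
  have hS : 0 ≤ S := (norm_nonneg _).trans (hhS 1 le_rfl)
  have hξ₀ : (2 * I * ξ ^ 2 : ℂ) ≠ 0 := by
    have : (ξ : ℂ) ≠ 0 := ofReal_ne_zero.2 fun h0 => by norm_num [h0] at hξ
    exact mul_ne_zero (mul_ne_zero two_ne_zero I_ne_zero) (pow_ne_zero 2 this)
  refine (norm_integral_le_of_hasDerivAt_eq_mul_sub (M := S * t₁⁻¹) (N := (1 + 3 * a ^ 2) * S)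
    hξ₀ (zero_lt_one.trans_le ht₁) ht ((continuousOn_duhamelIntegrand hh.continuousOn).mono hsub)
    (fun s hs => hh.hasDerivAt_duhamelIntegrand (ht₁.trans_lt hs.1))
    (((continuousOn_duhamelRemainder hgc hh.continuousOn).mono hsub).intervalIntegrable_of_Icc ht)
    (fun s hs => ?_) (fun s hs => ?_)).trans ?_
  · rw [norm_duhamelIntegrand (hpos s hs)]
    exact mul_le_mul (hhS s (hsub hs)) (inv_anti₀ (hpos _ (left_mem_Icc.2 ht)) hs.1)
      (inv_nonneg.2 (hpos s hs).le) hS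
  · refine (norm_duhamelRemainder_le (hpos s hs)).trans ?_
    have := hgS s (hsub hs)
    have := hhS s (hsub hs)
    gcongr
    nlinarith
  · have hnorm : ‖(2 * I * ξ ^ 2 : ℂ)‖ = 2 * ξ ^ 2 := by simp [← ofReal_pow]
    have hP : 0 ≤ (1 + a ^ 2) * (S * t₁⁻¹) := by positivity
    have := mul_le_mul_of_nonneg_left hξ hP
    rw [hnorm, div_le_iff₀ (by positivity), div_eq_mul_inv]
    nlinarith

theorem norm_integral_duhamelIntegrand_le (hg : ModeEq a ξ g h) (hh : ModeEq a ξ h g)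
    (hξ : 1 ≤ ξ ^ 2) {t₁ t₂ : ℝ} (ht₁ : 1 ≤ t₁) (ht : t₁ ≤ t₂) :
    ‖∫ s in t₁..t₂, duhamelIntegrand a ξ h s‖
      ≤ 2 * (1 + a ^ 2) * √(modeGrowthConst a) / t₁ * (‖g 1‖ + ‖h 1‖) := by
  set S := √(modeGrowthConst a) * (‖g 1‖ + ‖h 1‖)
  have hc := (modeGrowthConst_pos a).le
  have hS : 0 ≤ S := by positivity
  have hsq : ∀ s, 1 ≤ s → ‖g s‖ ^ 2 + ‖h s‖ ^ 2 ≤ S ^ 2 := fun s hs => by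
    rw [mul_pow, Real.sq_sqrt hc]
    refine (hg.sq_norm_add_sq_norm_le hh hξ hs).trans (mul_le_mul_of_nonneg_left ?_ hc)
    nlinarith [norm_nonneg (g 1), norm_nonneg (h 1)]
  have hgS : ∀ s, 1 ≤ s → ‖g s‖ ≤ S := fun s hs =>
    (pow_le_pow_iff_left₀ (norm_nonneg _) hS two_ne_zero).1
      (by nlinarith [hsq s hs, sq_nonneg ‖h s‖])
  have hhS : ∀ s, 1 ≤ s → ‖h s‖ ≤ S := fun s hs =>
    (pow_le_pow_iff_left₀ (norm_nonneg _) hS two_ne_zero).1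
      (by nlinarith [hsq s hs, sq_nonneg ‖g s‖])
  calc _ ≤ 2 * (1 + a ^ 2) * S / t₁ :=
        hh.norm_integral_duhamelIntegrand_le_of_bound hg.continuousOn hξ hgS hhS ht₁ ht
    _ = _ := by ring

end ModeEq

theorem eLpNorm_norm_add_norm_comp_neg_le {E : Type*} [NormedAddCommGroup E] {f : ℝ → E}
    (hf : AEStronglyMeasurable f volume) {p : ENNReal} (hp : 1 ≤ p) :
    eLpNorm (fun x => ‖f x‖ + ‖f (-x)‖) p volume ≤ 2 * eLpNorm f p volume := by
  have hneg := Measure.measurePreserving_neg (volume : Measure ℝ)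
  refine (eLpNorm_add_le hf.norm (hf.comp_measurePreserving hneg).norm hp).trans (le_of_eq ?_)
  rw [eLpNorm_norm, eLpNorm_norm, eLpNorm_comp_measurePreserving hf hneg, two_mul]

theorem stmt_8_general
    (a : ℝ) :
    ∃ C : ℝ, 0 < C ∧ ∀ F : ℝ → ℝ → ℂ,
      Measurable (fun p : ℝ × ℝ => F p.1 p.2) →
      (∀ᵐ ξ : ℝ, ∀ t ∈ Set.Ici (1:ℝ),
        HasDerivWithinAt (fun s => F s ξ)
          (-(Complex.I * (ξ:ℂ)^2) * F t ξ
            + Complex.I * (a:ℂ)^2 * (t:ℂ) ^ ((-1:ℂ) - 2*Complex.I*(a:ℂ)^2)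
                * (starRingEnd ℂ) (F t (-ξ))) (Set.Ici 1) t ∧
        HasDerivWithinAt (fun s => F s (-ξ))
          (-(Complex.I * (ξ:ℂ)^2) * F t (-ξ)
            + Complex.I * (a:ℂ)^2 * (t:ℂ) ^ ((-1:ℂ) - 2*Complex.I*(a:ℂ)^2)
                * (starRingEnd ℂ) (F t ξ)) (Set.Ici 1) t) →
      MemLp (F 1) 2 volume →
      ∀ t₁ t₂ : ℝ, 1 ≤ t₁ → t₁ ≤ t₂ →
        eLpNorm (fun ξ : ℝ => ∫ s in t₁..t₂,
            Complex.exp (Complex.I * (s:ℂ) * (ξ:ℂ)^2) * (starRingEnd ℂ) (F s (-ξ))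
              * (s:ℂ) ^ ((-1:ℂ) - 2*Complex.I*(a:ℂ)^2))
          2 (volume.restrict {ξ : ℝ | 1 ≤ |ξ|})
        ≤ ENNReal.ofReal (C / t₁) * eLpNorm (F 1) 2 volume := by
  have hc := modeGrowthConst_pos a
  refine ⟨4 * (1 + a ^ 2) * √(modeGrowthConst a), by positivity, ?_⟩
  intro F _ hF hF₁ t₁ t₂ ht₁ ht
  have hpt : ∀ᵐ ξ ∂volume.restrict {ξ : ℝ | 1 ≤ |ξ|},
      ‖∫ s in t₁..t₂, duhamelIntegrand a ξ (fun s => F s (-ξ)) s‖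
        ≤ 2 * (1 + a ^ 2) * √(modeGrowthConst a) / t₁ * ‖‖F 1 ξ‖ + ‖F 1 (-ξ)‖‖ := by
    filter_upwards [ae_restrict_of_ae hF,
      ae_restrict_mem (measurableSet_le measurable_const measurable_abs)] with ξ hξ hξ₁
    rw [Real.norm_of_nonneg (by positivity)]
    exact ModeEq.norm_integral_duhamelIntegrand_le (fun t ht => (hξ t ht).1)
      (fun t ht => (hξ t ht).2) (one_le_sq_iff_one_le_abs _ |>.2 hξ₁) ht₁ ht
  calc _ ≤ _ := eLpNorm_le_mul_eLpNorm_of_ae_le_mul hpt 2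
    _ ≤ ENNReal.ofReal (2 * (1 + a ^ 2) * √(modeGrowthConst a) / t₁)
          * (2 * eLpNorm (F 1) 2 volume) := by
        gcongr
        exact (eLpNorm_mono_measure _ Measure.restrict_le_self).trans
          (eLpNorm_norm_add_norm_comp_neg_le hF₁.1 one_le_two)
    _ = _ := by
        rw [← mul_assoc, ← ENNReal.ofReal_ofNat 2, ← ENNReal.ofReal_mul (by positivity)]
        ring_nf

/-- **L² bound on the high-frequency part of the Duhamel term.** For `a > 0` there is a
constant `C > 0` depending only on `a` such that: if `F : [1,∞) × ℝ → ℂ` is measurable, with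
`t ↦ F(t,ξ)` and `t ↦ F(t,−ξ)` of class `C¹` solving
`F_t(t,ξ) = −iξ² F(t,ξ) + ia² t^{−1−2ia²} conj(F(t,−ξ))` for a.e. `ξ`, and `F(1,·) ∈ L²(ℝ)`,
then for all `1 ≤ t₁ ≤ t₂` the function
`A_{t₁,t₂}(ξ) = ∫_{t₁}^{t₂} e^{isξ²} conj(F(s,−ξ)) s^{−1−2ia²} ds` satisfies
`‖A_{t₁,t₂}‖_{L²(|ξ|≥1)} ≤ C t₁^{−1} ‖F(1,·)‖_{L²(ℝ)}`. -/
theorem stmt_8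
    (a : ℝ) (ha : 0 < a) :
    ∃ C : ℝ, 0 < C ∧ ∀ F : ℝ → ℝ → ℂ,
      Measurable (fun p : ℝ × ℝ => F p.1 p.2) →
      (∀ᵐ ξ : ℝ, ∀ t ∈ Set.Ici (1:ℝ),
        HasDerivWithinAt (fun s => F s ξ)
          (-(Complex.I * (ξ:ℂ)^2) * F t ξ
            + Complex.I * (a:ℂ)^2 * (t:ℂ) ^ ((-1:ℂ) - 2*Complex.I*(a:ℂ)^2)
                * (starRingEnd ℂ) (F t (-ξ))) (Set.Ici 1) t ∧
        HasDerivWithinAt (fun s => F s (-ξ))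
          (-(Complex.I * (ξ:ℂ)^2) * F t (-ξ)
            + Complex.I * (a:ℂ)^2 * (t:ℂ) ^ ((-1:ℂ) - 2*Complex.I*(a:ℂ)^2)
                * (starRingEnd ℂ) (F t ξ)) (Set.Ici 1) t) →
      MemLp (F 1) 2 volume →
      ∀ t₁ t₂ : ℝ, 1 ≤ t₁ → t₁ ≤ t₂ →
        eLpNorm (fun ξ : ℝ => ∫ s in t₁..t₂,
            Complex.exp (Complex.I * (s:ℂ) * (ξ:ℂ)^2) * (starRingEnd ℂ) (F s (-ξ))
              * (s:ℂ) ^ ((-1:ℂ) - 2*Complex.I*(a:ℂ)^2))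
          2 (volume.restrict {ξ : ℝ | 1 ≤ |ξ|})
        ≤ ENNReal.ofReal (C / t₁) * eLpNorm (F 1) 2 volume :=
  stmt_8_general a
end
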